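/- arXiv:1705.07728 — 7 statements merged into one kernel-verified Lean document; each statement's English description precedes it below -/
import Mathlib

section
/- The bilinear map Φ : K^2 × K^2 → K^3 defined by Φ((a₀,a₁),(b₀,b₁)) = (a₀b₀, a₀b₁ + a₁b₀, a₁b₁) has bilinear rank exactly 3, i.e., it can be written as a sum of 3 terms of the form φ_t·c_t with φ_t a rank-one bilinear form and c_t ∈ K^3, but not as a sum of 2 such terms. -/
open scoped BigOperators

variable {K : Type*} [Field K]

/-- The space of bilinear forms on `K^m × K^n`. -/
abbrev Bil (m n : ℕ) (K : Type*) [Field K] :=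
  (Fin m → K) →ₗ[K] (Fin n → K) →ₗ[K] K

/-- A bilinear form has rank one if it is the product of two nonzero linear forms. -/
def IsRankOne {m n : ℕ} (φ : Bil m n K) : Prop :=
  ∃ (α : (Fin m → K) →ₗ[K] K) (β : (Fin n → K) →ₗ[K] K),
    α ≠ 0 ∧ β ≠ 0 ∧ ∀ a b, φ a b = α a * β b

/-- product of two linear forms as a bilinear form -/
def mulForm {m n : ℕ} (α : (Fin m → K) →ₗ[K] K) (β : (Fin n → K) →ₗ[K] K) : Bil m n K :=
  LinearMap.mk₂ K (fun a b => α a * β b)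
    (by intro a a' b; simp [add_mul])
    (by intro r a b; simp [smul_eq_mul, mul_assoc])
    (by intro a b b'; simp [mul_add])
    (by intro r a b; simp [smul_eq_mul]; ring)

lemma mulForm_rankOne {m n : ℕ} (α : (Fin m → K) →ₗ[K] K) (β : (Fin n → K) →ₗ[K] K)
    (hα : α ≠ 0) (hβ : β ≠ 0) : IsRankOne (mulForm α β) :=
  ⟨α, β, hα, hβ, fun _ _ => rfl⟩

lemma vec3_ext {α : Type*} (v w : Fin 3 → α)
    (h0 : v 0 = w 0) (h1 : v 1 = w 1) (h2 : v 2 = w 2) : v = w := by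
  funext i; fin_cases i <;> assumption

theorem stmt2 :
    (∃ (φ : Fin 3 → Bil 2 2 K) (c : Fin 3 → Fin 3 → K),
      (∀ t, IsRankOne (φ t)) ∧
      ∀ a b : Fin 2 → K,
        (![a 0 * b 0, a 0 * b 1 + a 1 * b 0, a 1 * b 1] : Fin 3 → K) = ∑ t, φ t a b • c t)
    ∧ ¬ (∃ (φ : Fin 2 → Bil 2 2 K) (c : Fin 2 → Fin 3 → K),
      (∀ t, IsRankOne (φ t)) ∧
      ∀ a b : Fin 2 → K,
        (![a 0 * b 0, a 0 * b 1 + a 1 * b 0, a 1 * b 1] : Fin 3 → K) = ∑ t, φ t a b • c t) := by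
  constructor
  · -- Karatsuba
    set p0 : (Fin 2 → K) →ₗ[K] K := LinearMap.proj 0 with hp0
    set p1 : (Fin 2 → K) →ₗ[K] K := LinearMap.proj 1 with hp1
    have h0 : p0 ≠ 0 := by
      intro h
      have := congrFun (congrArg DFunLike.coe h) ![1, 0]
      simp [hp0] at this
    have h1 : p1 ≠ 0 := by
      intro h
      have := congrFun (congrArg DFunLike.coe h) ![0, 1]
      simp [hp1] at this
    have h01 : p0 + p1 ≠ 0 := by
      intro h
      have := congrFun (congrArg DFunLike.coe h) ![1, 0]
      simp [hp0, hp1] at this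
    refine ⟨![mulForm p0 p0, mulForm (p0 + p1) (p0 + p1), mulForm p1 p1],
      ![![1, -1, 0], ![0, 1, 0], ![0, -1, 1]], ?_, ?_⟩
    · intro t
      fin_cases t
      · exact mulForm_rankOne _ _ h0 h0
      · exact mulForm_rankOne _ _ h01 h01
      · exact mulForm_rankOne _ _ h1 h1
    · intro a b
      refine vec3_ext _ _ ?_ ?_ ?_ <;>
        · simp only [Finset.sum_apply, Fin.sum_univ_three, Pi.smul_apply, smul_eq_mul,
            Matrix.cons_val_zero, Matrix.cons_val_one, Matrix.cons_val_two,
            Matrix.tail_cons, Matrix.head_cons,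
            mulForm, LinearMap.mk₂_apply, hp0, hp1, LinearMap.add_apply, LinearMap.proj_apply]
          ring
  · rintro ⟨φ, c, -, h⟩
    set A : Matrix (Fin 3) (Fin 2) K :=
      Matrix.of ![fun t => φ t ![1, 0] ![1, 0], fun t => φ t ![1, 0] ![0, 1],
        fun t => φ t ![0, 1] ![0, 1]] with hA
    set M : Matrix (Fin 2) (Fin 3) K := Matrix.of fun t i => c t i with hM
    have key : ∀ (a b : Fin 2 → K) (j : Fin 3),
        φ 0 a b * c 0 j + φ 1 a b * c 1 j
          = (![a 0 * b 0, a 0 * b 1 + a 1 * b 0, a 1 * b 1] : Fin 3 → K) j := by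
      intro a b j
      have := congrFun (h a b) j
      simp only [Finset.sum_apply, Fin.sum_univ_two, Pi.smul_apply, smul_eq_mul] at this
      exact this.symm
    have entry : ∀ (a b : Fin 2 → K) (r : Fin 3) (j : Fin 3),
        (A * M) r j = φ 0 (![![1,0], ![1,0], ![0,1]] r) (![![1,0], ![0,1], ![0,1]] r) * c 0 j
          + φ 1 (![![1,0], ![1,0], ![0,1]] r) (![![1,0], ![0,1], ![0,1]] r) * c 1 j := by
      intro a b r j
      rw [Matrix.mul_apply, Fin.sum_univ_two]
      fin_cases r <;> rfl
    have hAM : A * M = 1 := by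
      refine vec3_ext _ _ (vec3_ext _ _ ?_ ?_ ?_) (vec3_ext _ _ ?_ ?_ ?_)
        (vec3_ext _ _ ?_ ?_ ?_) <;>
      · rw [entry ![1,0] ![1,0]]
        norm_num [key, Matrix.one_apply, Fin.ext_iff, Matrix.cons_val_two, Matrix.tail_cons, Matrix.head_cons]
    have hle := Matrix.rank_mul_le_left A M
    rw [hAM] at hle
    have h3 : (1 : Matrix (Fin 3) (Fin 3) K).rank = 3 := by
      simp [Matrix.rank_one]
    have h2 : A.rank ≤ 2 := A.rank_le_width
    omega
end

section
/- Let T be an ℓ-dimensional subspace of the space of bilinear forms on K^m × K^n, and let V be a subspace of dimension r spanned by a linearly independent family of r rank-one bilinear forms with T ⊆ V. Then there exists a subspace W spanned by a linearly independent family of r−ℓ rank-one bilinear forms such that T ⊕ W = V. -/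
open scoped BigOperators

variable {K : Type*} [Field K]

/-- `V` is spanned by a linearly independent family of `r` rank-one bilinear forms. -/
def SpannedByRankOne {m n : ℕ} (V : Submodule K (Bil m n K)) (r : ℕ) : Prop :=
  ∃ φ : Fin r → Bil m n K, LinearIndependent K φ ∧ (∀ t, IsRankOne (φ t)) ∧
    Submodule.span K (Set.range φ) = V

theorem stmt3_aux {M : Type*} [AddCommGroup M] [Module K M] {ℓ r : ℕ} (P : M → Prop)
    (T V : Submodule K M) (hT : Module.finrank K T = ℓ)
    (φ : Fin r → M) (hφind : LinearIndependent K φ) (hφP : ∀ t, P (φ t))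
    (hφspan : Submodule.span K (Set.range φ) = V) (hTV : T ≤ V) :
    ∃ (W : Submodule K M) (χ : Fin (r - ℓ) → M), LinearIndependent K χ ∧
      (∀ i, P (χ i)) ∧ Submodule.span K (Set.range χ) = W ∧ Disjoint T W ∧ T ⊔ W = V := by
  classical
  have hmem : ∀ t, φ t ∈ V := fun t => hφspan ▸ Submodule.subset_span (Set.mem_range_self t)
  set ψ : Fin r → V := fun t => ⟨φ t, hmem t⟩ with hψdef
  have hcomp : (V.subtype : V →ₗ[K] M) ∘ ψ = φ := rfl
  have hψind : LinearIndependent K ψ :=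
    LinearIndependent.of_comp V.subtype (by rw [hcomp]; exact hφind)
  have himg : (V.subtype : V →ₗ[K] M) '' Set.range ψ = Set.range φ := by
    rw [← Set.range_comp, hcomp]
  have hψspan : Submodule.span K (Set.range ψ) = ⊤ := by
    apply Submodule.map_injective_of_injective V.injective_subtype
    rw [Submodule.map_span, Submodule.map_top, Submodule.range_subtype, himg, hφspan]
  have : Module.Finite K V :=
    ⟨⟨(Set.finite_range ψ).toFinset, by
      rw [Set.Finite.coe_toFinset]; exact hψspan⟩⟩
  set T' : Submodule K V := T.comap V.subtype with hT'def
  obtain ⟨sB, hsb', hsBspan, hsBind⟩ := exists_linearIndependent K (T' : Set V)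
  rw [Submodule.span_eq] at hsBspan
  obtain ⟨b, hbt, hsb, htb, hbind⟩ : ∃ b ⊆ sB ∪ Set.range ψ, sB ⊆ b ∧
      sB ∪ Set.range ψ ⊆ Submodule.span K b ∧ LinearIndependent K ((↑) : b → V) := by
    obtain ⟨b, h1, h2, h3, h4⟩ := exists_linearIndepOn_extension (v := id) hsBind
      (Set.subset_union_left (t := Set.range ψ))
    exact ⟨b, h1, h2, by simpa using h3, h4⟩
  have hbspan : Submodule.span K b = ⊤ := by
    rw [eq_top_iff, ← hψspan]
    exact Submodule.span_le.2 fun x hx => htb (Set.mem_union_right _ hx)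
  set c : Set V := b \ sB with hcdef
  have hcsub : c ⊆ Set.range ψ := fun x hx =>
    (hbt hx.1).resolve_left hx.2
  -- finiteness
  have hbfin : b.Finite := hbind.setFinite
  have hsBfin : sB.Finite := hbfin.subset hsb
  have hcfin : c.Finite := hbfin.diff
  have hcind : LinearIndependent K ((↑) : c → V) := LinearIndepOn.mono (v := id) (s := b) hbind Set.diff_subset
  -- dimensions
  have hrV : Module.finrank K V = r := by
    have B : Module.Basis (Fin r) K V := Module.Basis.mk hψind (le_of_eq hψspan.symm)
    simp [Module.finrank_eq_card_basis B]
  have hT'rank : Module.finrank K T' = ℓ := by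
    rw [(Submodule.comapSubtypeEquivOfLe hTV).finrank_eq, hT]
  have hsBcard : sB.ncard = ℓ := by
    have := hsBfin.fintype
    have h1 := finrank_span_set_eq_card (R := K) (s := sB) hsBind
    rw [hsBspan, hT'rank] at h1
    rw [Set.ncard_eq_toFinset_card' sB]
    omega
  have hbcard : b.ncard = r := by
    have := hbfin.fintype
    have h1 := finrank_span_set_eq_card (R := K) (s := b) hbind
    rw [hbspan, finrank_top, hrV] at h1
    rw [Set.ncard_eq_toFinset_card' b]
    omega
  have hccard : c.ncard = r - ℓ := by
    rw [hcdef, Set.ncard_diff hsb hsBfin, hsBcard, hbcard]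
  -- the complement
  set W' : Submodule K V := Submodule.span K c with hW'def
  have hmap : T = T'.map V.subtype := by
    rw [hT'def, Submodule.map_comap_subtype, inf_eq_right.2 hTV]
  have : Fintype c := hcfin.fintype
  have hcard : Fintype.card c = r - ℓ := by
    rw [← hccard, Set.ncard_eq_toFinset_card', Set.toFinset_card]
  set e : Fin (r - ℓ) ≃ c := (Fintype.equivFinOfCardEq hcard).symm with hedef
  refine ⟨W'.map V.subtype, fun i => ((e i : V) : M), ?_, ?_, ?_, ?_, ?_⟩
  · have h1 : LinearIndependent K (fun x : c => ((x : V) : M)) :=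
      hcind.map' V.subtype (Submodule.ker_subtype V)
    exact h1.comp e e.injective
  · intro i
    obtain ⟨t, ht⟩ := hcsub (e i).2
    have h2 : φ t = ((e i : V) : M) := by rw [← ht]
    show P ((e i : V) : M)
    rw [← h2]
    exact hφP t
  · have hrange : Set.range (fun i => ((e i : V) : M)) =
        (V.subtype : V →ₗ[K] M) '' c := by
      ext x
      constructor
      · rintro ⟨i, rfl⟩
        exact ⟨(e i : V), (e i).2, rfl⟩
      · rintro ⟨y, hy, rfl⟩
        exact ⟨e.symm ⟨y, hy⟩, by simp⟩
    rw [hrange, ← Submodule.map_span]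
  · -- Disjoint
    have hdisj : Disjoint T' W' := by
      have hs : sB = Subtype.val '' {x : b | (x : V) ∈ sB} := by
        show sB = Subtype.val '' (Subtype.val ⁻¹' sB)
        rw [Subtype.image_preimage_coe, Set.inter_eq_right.2 hsb]
      have hc2 : c = Subtype.val '' {x : b | (x : V) ∈ c} := by
        show c = Subtype.val '' (Subtype.val ⁻¹' c)
        rw [Subtype.image_preimage_coe, Set.inter_eq_right.2 Set.diff_subset]
      have hdidx : Disjoint {x : b | (x : V) ∈ sB} {x : b | (x : V) ∈ c} := by
        rw [Set.disjoint_left]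
        rintro x hx1 hx2
        exact hx2.2 hx1
      have := hbind.disjoint_span_image hdidx
      rw [← hs, ← hc2] at this
      rwa [hsBspan] at this
    rw [hmap, disjoint_iff, ← Submodule.map_inf _ V.injective_subtype,
      disjoint_iff.1 hdisj, Submodule.map_bot]
  · -- sup
    have hsup : T' ⊔ W' = ⊤ := by
      rw [← hsBspan, hW'def, ← Submodule.span_union, Set.union_diff_cancel hsb, hbspan]
    rw [hmap, ← Submodule.map_sup, hsup, Submodule.map_top, Submodule.range_subtype]

theorem stmt3 {m n ℓ r : ℕ} (T V : Submodule K (Bil m n K))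
    (hT : Module.finrank K T = ℓ) (hV : SpannedByRankOne V r) (hTV : T ≤ V) :
    ∃ W : Submodule K (Bil m n K),
      SpannedByRankOne W (r - ℓ) ∧ Disjoint T W ∧ T ⊔ W = V := by
  obtain ⟨φ, hφind, hφr1, hφspan⟩ := hV
  have H := @stmt3_aux K _ (Bil m n K) _ _ ℓ r IsRankOne T V hT φ hφind hφr1 hφspan hTV
  obtain ⟨W, χ, hχind, hχP, hχspan, hdisj, hsup⟩ := H
  exact ⟨W, ⟨χ, hχind, hχP, hχspan⟩, hdisj, hsup⟩
end

section
/- Let Stab(T_ℓ) be the setwise stabilizer in GL_ℓ(K) × GL_ℓ(K) (acting by M ↦ XᵀMY) of the space T_ℓ of upper triangular Toeplitz matrices, ℓ ≥ 2. Then the orbit of the identity matrix under Stab(T_ℓ) is exactly the set of invertible matrices of T_ℓ. -/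
open Matrix

variable {K : Type*} [Field K]

/-- The nilpotent Jordan block: 1s on the superdiagonal, 0s elsewhere. -/
def jordanN (K : Type*) [Field K] (ℓ : ℕ) : Matrix (Fin ℓ) (Fin ℓ) K :=
  Matrix.of fun i j => if (j : ℕ) = (i : ℕ) + 1 then 1 else 0

/-- The upper-triangular Toeplitz matrix with entries `m (j - i)` for `i ≤ j`. -/
def toepl {ℓ : ℕ} (m : Fin ℓ → K) : Matrix (Fin ℓ) (Fin ℓ) K :=
  Matrix.of fun i j =>
    if (i : ℕ) ≤ (j : ℕ) then
      m ⟨(j : ℕ) - (i : ℕ), lt_of_le_of_lt (Nat.sub_le _ _) j.isLt⟩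
    else 0

/-- Extension of a finitely supported sequence to ℕ. -/
def extN {ℓ : ℕ} (a : Fin ℓ → K) : ℕ → K :=
  fun n => if h : n < ℓ then a ⟨n, h⟩ else 0

lemma toepl_apply {ℓ : ℕ} (m : Fin ℓ → K) (i j : Fin ℓ) :
    toepl m i j = if (i : ℕ) ≤ (j : ℕ) then extN m ((j : ℕ) - (i : ℕ)) else 0 := by
  simp only [toepl, Matrix.of_apply, extN]
  split
  · rw [dif_pos]
  · rfl

/-- Convolution of sequences. -/
def convN (a b : ℕ → K) (d : ℕ) : K :=
  ∑ e ∈ Finset.range (d + 1), a e * b (d - e)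

lemma toepl_mul {ℓ : ℕ} (a b : Fin ℓ → K) :
    toepl a * toepl b = toepl (fun d : Fin ℓ => convN (extN a) (extN b) d) := by
  ext i j
  rw [Matrix.mul_apply, toepl_apply]
  have hsum : ∀ k : Fin ℓ, toepl a i k * toepl b k j
      = (if (i : ℕ) ≤ (k : ℕ) then extN a ((k : ℕ) - i) else 0) *
        (if (k : ℕ) ≤ (j : ℕ) then extN b ((j : ℕ) - k) else 0) := by
    intro k; rw [toepl_apply, toepl_apply]
  simp only [hsum]
  rw [Fin.sum_univ_eq_sum_range
    (fun k => (if (i : ℕ) ≤ k then extN a (k - i) else 0) *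
      (if k ≤ (j : ℕ) then extN b ((j : ℕ) - k) else 0))]
  by_cases hij : (i : ℕ) ≤ (j : ℕ)
  · rw [if_pos hij]
    have hsub : Finset.Icc (i : ℕ) (j : ℕ) ⊆ Finset.range ℓ := by
      intro k hk
      simp only [Finset.mem_Icc] at hk
      exact Finset.mem_range.2 (lt_of_le_of_lt hk.2 j.isLt)
    rw [← Finset.sum_subset hsub (by
      intro k hk hk'
      simp only [Finset.mem_Icc, not_and_or, not_le] at hk'
      rcases hk' with h | h
      · rw [if_neg (show ¬ (i : ℕ) ≤ k by omega), zero_mul]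
      · rw [if_neg (show ¬ k ≤ (j : ℕ) by omega), mul_zero])]
    rw [← Finset.Ico_add_one_right_eq_Icc, Finset.sum_Ico_eq_sum_range]
    have hlen : (j : ℕ) + 1 - (i : ℕ) = ((j : ℕ) - (i : ℕ)) + 1 := by omega
    rw [hlen]
    have hext : extN (fun d : Fin ℓ => convN (extN a) (extN b) (d : ℕ)) ((j:ℕ) - (i:ℕ))
        = convN (extN a) (extN b) ((j:ℕ) - (i:ℕ)) := by
      unfold extN
      rw [dif_pos (lt_of_le_of_lt (Nat.sub_le _ _) j.isLt)]
    rw [hext]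
    unfold convN
    apply Finset.sum_congr rfl
    intro e he
    simp only [Finset.mem_range] at he
    rw [if_pos (by omega), if_pos (by omega)]
    congr 2 <;> omega
  · rw [if_neg hij]
    apply Finset.sum_eq_zero
    intro k hk
    by_cases h1 : (i : ℕ) ≤ k
    · rw [if_neg (show ¬ k ≤ (j : ℕ) by omega), mul_zero]
    · rw [if_neg h1, zero_mul]

lemma convN_comm (a b : ℕ → K) (d : ℕ) : convN a b d = convN b a d := by
  unfold convN
  rw [← Finset.sum_range_reflect]
  apply Finset.sum_congr rfl
  intro e he
  simp only [Finset.mem_range] at he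
  have h1 : d + 1 - 1 - e = d - e := by omega
  have h2 : d - (d - e) = e := by omega
  rw [h1, h2, mul_comm]

/-- Delta sequence on `Fin ℓ`. -/
def deltaF (K : Type*) [Field K] (ℓ : ℕ) : Fin ℓ → K :=
  fun d => if (d : ℕ) = 0 then 1 else 0

lemma toepl_delta {ℓ : ℕ} : (toepl (deltaF K ℓ)) = (1 : Matrix (Fin ℓ) (Fin ℓ) K) := by
  ext i j
  rw [toepl_apply, Matrix.one_apply]
  unfold extN deltaF
  by_cases hij : (i : ℕ) ≤ (j : ℕ)
  · rw [if_pos hij, dif_pos (lt_of_le_of_lt (Nat.sub_le _ _) j.isLt)]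
    by_cases h : (j : ℕ) - (i : ℕ) = 0
    · rw [if_pos h, if_pos (Fin.ext (by omega))]
    · rw [if_neg h, if_neg (fun hc => h (by rw [hc]; omega))]
  · rw [if_neg hij, if_neg (fun hc => hij (le_of_eq (congrArg Fin.val hc)))]

/-- The inverse sequence: coefficients of the inverse power series. -/
def invSeq (c : K) (a : ℕ → K) : ℕ → K
  | 0 => c
  | d + 1 => -c * ∑ e : Fin (d + 1), invSeq c a e * a (d + 1 - e)
  termination_by d => d
  decreasing_by exact e.isLt

lemma invSeq_conv (c : K) (a : ℕ → K) (hc : c * a 0 = 1) (d : ℕ) :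
    convN (invSeq c a) a d = if d = 0 then 1 else 0 := by
  cases d with
  | zero =>
    simpa [convN, invSeq] using hc
  | succ d =>
    rw [if_neg (Nat.succ_ne_zero d)]
    unfold convN
    rw [Finset.sum_range_succ]
    have hb : invSeq c a (d + 1)
        = -c * ∑ e ∈ Finset.range (d + 1), invSeq c a e * a (d + 1 - e) := by
      rw [invSeq]
      congr 1
      rw [Fin.sum_univ_eq_sum_range (fun e => invSeq c a e * a (d + 1 - e))]
    rw [hb, Nat.sub_self]
    have h2 : ∀ S : K, S + -c * S * a 0 = S - S * (c * a 0) := fun S => by ring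
    rw [h2, hc, mul_one, sub_self]

lemma extN_invSeq {ℓ : ℕ} (c : K) (a : Fin ℓ → K) (d : ℕ) (hd : d < ℓ) :
    extN (fun e : Fin ℓ => invSeq c (extN a) (e : ℕ)) d = invSeq c (extN a) d := by
  unfold extN
  rw [dif_pos hd]

/-- If the leading coefficient is invertible, so is the Toeplitz matrix,
with Toeplitz two-sided inverse. -/
lemma toepl_inv {ℓ : ℕ} (a : Fin ℓ → K) (ha : extN a 0 ≠ 0) :
    ∃ b : Fin ℓ → K, toepl b * toepl a = 1 ∧ toepl a * toepl b = 1 := by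
  set c := (extN a 0)⁻¹ with hc
  have hca : c * extN a 0 = 1 := inv_mul_cancel₀ ha
  have key : (fun d : Fin ℓ =>
      convN (extN fun e : Fin ℓ => invSeq c (extN a) (e : ℕ)) (extN a) (d : ℕ))
      = deltaF K ℓ := by
    funext d
    have h1 : convN (extN fun e : Fin ℓ => invSeq c (extN a) (e : ℕ)) (extN a) (d : ℕ)
        = convN (invSeq c (extN a)) (extN a) (d : ℕ) := by
      unfold convN
      apply Finset.sum_congr rfl
      intro e he
      simp only [Finset.mem_range] at he
      rw [extN_invSeq c a e (by omega)]
    rw [h1, invSeq_conv c (extN a) hca]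
    rfl
  have key2 : (fun d : Fin ℓ =>
      convN (extN a) (extN fun e : Fin ℓ => invSeq c (extN a) (e : ℕ)) (d : ℕ))
      = deltaF K ℓ := by
    funext d
    rw [convN_comm]
    exact congrFun key d
  refine ⟨fun e => invSeq c (extN a) (e : ℕ), ?_, ?_⟩
  · rw [toepl_mul, key, toepl_delta]
  · rw [toepl_mul, key2, toepl_delta]

lemma toepl_det {ℓ : ℕ} (a : Fin ℓ → K) : (toepl a).det = (extN a 0) ^ ℓ := by
  have htri : (toepl a).BlockTriangular id := by
    intro i j hij
    rw [toepl_apply, if_neg (by exact Nat.not_le.2 hij)]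
  rw [Matrix.det_of_upperTriangular htri]
  have : ∀ i : Fin ℓ, toepl a i i = extN a 0 := by
    intro i
    rw [toepl_apply, if_pos le_rfl, Nat.sub_self]
  simp [this]

theorem stmt11 (ℓ : ℕ) (hℓ : 2 ≤ ℓ) (M : Matrix (Fin ℓ) (Fin ℓ) K) :
    (∃ X Y : Matrix (Fin ℓ) (Fin ℓ) K, IsUnit X ∧ IsUnit Y ∧
      (fun A => Xᵀ * A * Y) '' Set.range (toepl : (Fin ℓ → K) → Matrix (Fin ℓ) (Fin ℓ) K)
        = Set.range (toepl : (Fin ℓ → K) → Matrix (Fin ℓ) (Fin ℓ) K) ∧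
      Xᵀ * 1 * Y = M)
    ↔ (M ∈ Set.range (toepl : (Fin ℓ → K) → Matrix (Fin ℓ) (Fin ℓ) K) ∧ IsUnit M) := by
  constructor
  · rintro ⟨X, Y, hX, hY, himg, hM⟩
    constructor
    · rw [← himg]
      exact ⟨1, ⟨deltaF K ℓ, toepl_delta⟩, hM⟩
    · rw [← hM]
      apply (Matrix.isUnit_iff_isUnit_det _).2
      simp only [Matrix.det_mul, Matrix.det_transpose, Matrix.det_one, mul_one]
      exact ((Matrix.isUnit_iff_isUnit_det X).1 hX).mul
        ((Matrix.isUnit_iff_isUnit_det Y).1 hY)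
  · rintro ⟨⟨m, hm⟩, hMu⟩
    have ha : extN m 0 ≠ 0 := by
      have hdet : IsUnit M.det := (Matrix.isUnit_iff_isUnit_det M).1 hMu
      rw [← hm, toepl_det] at hdet
      intro h
      rw [h] at hdet
      have : (0 : K) ^ ℓ = 0 := zero_pow (by omega)
      rw [this] at hdet
      exact hdet.ne_zero rfl
    obtain ⟨b, hba, hab⟩ := toepl_inv m ha
    refine ⟨1, M, isUnit_one, hMu, ?_, by rw [Matrix.transpose_one, one_mul, one_mul]⟩
    apply Set.eq_of_subset_of_subset
    · rintro _ ⟨_, ⟨x, rfl⟩, rfl⟩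
      show (1 : Matrix (Fin ℓ) (Fin ℓ) K)ᵀ * toepl x * M ∈ _
      rw [Matrix.transpose_one, one_mul, ← hm, toepl_mul]
      exact ⟨_, rfl⟩
    · rintro _ ⟨x, rfl⟩
      refine ⟨toepl x * toepl b, ⟨?_, ?_⟩⟩
      · rw [toepl_mul]; exact ⟨_, rfl⟩
      · show (1 : Matrix (Fin ℓ) (Fin ℓ) K)ᵀ * (toepl x * toepl b) * M = toepl x
        rw [Matrix.transpose_one, one_mul, ← hm, mul_assoc, hba, mul_one]
end

section
/- For ℓ ≥ 2 and K finite, the setwise stabilizer of the space T_ℓ of upper triangular Toeplitz ℓ×ℓ matrices under the action M·(X,Y) = XᵀMY of GL_ℓ(K)×GL_ℓ(K) has cardinality |K|^{3ℓ−4}(|K|−1)³. -/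
open Matrix

variable {K : Type*} [Field K]

namespace Stmt12

variable {ℓ : ℕ}

lemma jordanN_apply (i j : Fin ℓ) :
    jordanN K ℓ i j = if (j : ℕ) = (i : ℕ) + 1 then 1 else 0 := rfl

lemma toepl_apply (m : Fin ℓ → K) (i j : Fin ℓ) :
    toepl m i j = if (i : ℕ) ≤ (j : ℕ) then
      m ⟨(j : ℕ) - (i : ℕ), lt_of_le_of_lt (Nat.sub_le _ _) j.isLt⟩ else 0 := rfl

lemma toepl_injective (hℓ : 0 < ℓ) :
    Function.Injective (toepl : (Fin ℓ → K) → Matrix (Fin ℓ) (Fin ℓ) K) := by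
  intro a b h
  funext j
  have h2 := congrFun (congrFun h ⟨0, hℓ⟩) j
  simpa [toepl_apply, Fin.eta] using h2

/-- `A i j = 0` whenever `j < i + a`. -/
def offDom (a : ℕ) (A : Matrix (Fin ℓ) (Fin ℓ) K) : Prop :=
  ∀ i j : Fin ℓ, (j : ℕ) < (i : ℕ) + a → A i j = 0

lemma offDom_mul {a b : ℕ} {A B : Matrix (Fin ℓ) (Fin ℓ) K}
    (hA : offDom a A) (hB : offDom b B) : offDom (a + b) (A * B) := by
  intro i j hj
  rw [Matrix.mul_apply]
  apply Finset.sum_eq_zero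
  intro k _
  by_cases hk : (k : ℕ) < (i : ℕ) + a
  · rw [hA i k hk, zero_mul]
  · rw [hB k j (by omega), mul_zero]

lemma lead_mul {a b : ℕ} {A B : Matrix (Fin ℓ) (Fin ℓ) K}
    (hA : offDom a A) (hB : offDom b B) (i j : Fin ℓ)
    (hij : (j : ℕ) = (i : ℕ) + a + b) :
    (A * B) i j = A i ⟨(i : ℕ) + a, by have := j.isLt; omega⟩ *
      B ⟨(i : ℕ) + a, by have := j.isLt; omega⟩ j := by
  have hia : (i : ℕ) + a < ℓ := by have := j.isLt; omega
  rw [Matrix.mul_apply]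
  apply Finset.sum_eq_single (⟨(i : ℕ) + a, hia⟩ : Fin ℓ)
  · intro k _ hk
    have hk' : (k : ℕ) ≠ (i : ℕ) + a := fun h => hk (Fin.ext h)
    by_cases h1 : (k : ℕ) < (i : ℕ) + a
    · rw [hA i k h1, zero_mul]
    · rw [hB k j (by omega), mul_zero]
  · intro h; exact absurd (Finset.mem_univ _) h

lemma offDom_pow {a : ℕ} {A : Matrix (Fin ℓ) (Fin ℓ) K}
    (hA : offDom a A) (p : ℕ) : offDom (p * a) (A ^ p) := by
  induction p with
  | zero =>
    intro i j hj
    simp only [pow_zero]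
    exact Matrix.one_apply_ne (by intro h; subst h; omega)
  | succ p ih =>
    rw [pow_succ]
    have := offDom_mul ih hA
    rwa [Nat.succ_mul]

lemma pow_lead {a : ℕ} {A : Matrix (Fin ℓ) (Fin ℓ) K} (c : K)
    (hA : offDom a A) (hc : ∀ i j : Fin ℓ, (j : ℕ) = (i : ℕ) + a → A i j = c)
    (p : ℕ) : ∀ i j : Fin ℓ, (j : ℕ) = (i : ℕ) + p * a → (A ^ p) i j = c ^ p := by
  induction p with
  | zero =>
    intro i j hij
    have : j = i := Fin.ext (by omega)
    subst this
    simp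
  | succ p ih =>
    intro i j hij
    have hm : (j : ℕ) = (i : ℕ) + p * a + a := by rw [hij, add_mul, one_mul, add_assoc]
    rw [pow_succ, lead_mul (offDom_pow hA p) hA i j hm]
    rw [ih _ _ rfl, hc _ _ hm, pow_succ]

-- PART 2

lemma jordanN_pow (p : ℕ) (i j : Fin ℓ) :
    ((jordanN K ℓ) ^ p) i j = if (j : ℕ) = (i : ℕ) + p then (1 : K) else 0 := by
  induction p generalizing j with
  | zero =>
    rw [pow_zero, Matrix.one_apply]
    congr 1
    simp [eq_comm, Fin.ext_iff]
  | succ p ih =>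
    rw [pow_succ, Matrix.mul_apply]
    by_cases hj : (j : ℕ) = 0
    · rw [Finset.sum_eq_zero, if_neg (by omega)]
      intro k _
      rw [jordanN_apply, if_neg (by omega), mul_zero]
    · have hj1 : (j : ℕ) - 1 < ℓ := by have := j.isLt; omega
      rw [Finset.sum_eq_single (⟨(j : ℕ) - 1, hj1⟩ : Fin ℓ)]
      · rw [jordanN_apply,
          if_pos (show (j : ℕ) = ((⟨(j : ℕ) - 1, hj1⟩ : Fin ℓ) : ℕ) + 1 by simp; omega),
          mul_one, ih]
        congr 1
        simp only [eq_iff_iff]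
        constructor <;> intro h <;> omega
      · intro k _ hk
        rw [jordanN_apply, if_neg (fun h =>
          hk (Fin.ext (show (k : ℕ) = (j : ℕ) - 1 by omega))), mul_zero]
      · intro h; exact absurd (Finset.mem_univ _) h

lemma jordanN_pow_card : (jordanN K ℓ) ^ ℓ = 0 := by
  ext i j
  rw [jordanN_pow, if_neg (by have := j.isLt; omega)]
  rfl

lemma jordanN_pow_pred (hℓ : 0 < ℓ) : (jordanN K ℓ) ^ (ℓ - 1) ≠ 0 := by
  intro h
  have h2 := congrFun (congrFun h ⟨0, hℓ⟩) ⟨ℓ - 1, by omega⟩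
  rw [jordanN_pow, if_pos (by simp)] at h2
  exact one_ne_zero h2

lemma toepl_eq_sum (m : Fin ℓ → K) :
    toepl m = ∑ k : Fin ℓ, m k • (jordanN K ℓ) ^ (k : ℕ) := by
  ext i j
  rw [Matrix.sum_apply, toepl_apply]
  by_cases h : (i : ℕ) ≤ (j : ℕ)
  · rw [if_pos h]
    rw [Finset.sum_eq_single (⟨(j : ℕ) - (i : ℕ), lt_of_le_of_lt (Nat.sub_le _ _) j.isLt⟩ : Fin ℓ)]
    · rw [Matrix.smul_apply, jordanN_pow, if_pos (by simp; omega), smul_eq_mul, mul_one]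
    · intro k _ hk
      rw [Matrix.smul_apply, jordanN_pow, if_neg (by
        intro hh
        exact hk (Fin.ext (by simp; omega))), smul_eq_mul, mul_zero]
    · intro h; exact absurd (Finset.mem_univ _) h
  · rw [if_neg h]
    refine (Finset.sum_eq_zero ?_).symm
    intro k _
    rw [Matrix.smul_apply, jordanN_pow, if_neg (by omega), smul_eq_mul, mul_zero]

lemma toepl_commute (m : Fin ℓ → K) : Commute (toepl m) (jordanN K ℓ) := by
  rw [toepl_eq_sum]
  apply Commute.sum_left
  intro k _
  exact ((Commute.refl _).pow_left _).smul_left _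

-- PART 3

lemma mul_jordanN_apply (A : Matrix (Fin ℓ) (Fin ℓ) K) (i j : Fin ℓ) :
    (A * jordanN K ℓ) i j =
      if 1 ≤ (j : ℕ) then A i ⟨(j : ℕ) - 1, lt_of_le_of_lt (Nat.sub_le _ _) j.isLt⟩ else 0 := by
  rw [Matrix.mul_apply]
  by_cases hj : 1 ≤ (j : ℕ)
  · rw [if_pos hj]
    rw [Finset.sum_eq_single (⟨(j : ℕ) - 1, lt_of_le_of_lt (Nat.sub_le _ _) j.isLt⟩ : Fin ℓ)]
    · rw [jordanN_apply, if_pos (by simp; omega), mul_one]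
    · intro k _ hk
      rw [jordanN_apply, if_neg (fun h =>
        hk (Fin.ext (show (k : ℕ) = (j : ℕ) - 1 by omega))), mul_zero]
    · intro h; exact absurd (Finset.mem_univ _) h
  · rw [if_neg hj]
    apply Finset.sum_eq_zero
    intro k _
    rw [jordanN_apply, if_neg (by omega), mul_zero]

lemma jordanN_mul_apply (A : Matrix (Fin ℓ) (Fin ℓ) K) (i j : Fin ℓ) :
    (jordanN K ℓ * A) i j =
      if h : (i : ℕ) + 1 < ℓ then A ⟨(i : ℕ) + 1, h⟩ j else 0 := by
  rw [Matrix.mul_apply]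
  by_cases hi : (i : ℕ) + 1 < ℓ
  · rw [dif_pos hi]
    rw [Finset.sum_eq_single (⟨(i : ℕ) + 1, hi⟩ : Fin ℓ)]
    · rw [jordanN_apply, if_pos (by simp), one_mul]
    · intro k _ hk
      rw [jordanN_apply, if_neg (fun h =>
        hk (Fin.ext (show (k : ℕ) = (i : ℕ) + 1 by omega))), zero_mul]
    · intro h; exact absurd (Finset.mem_univ _) h
  · rw [dif_neg hi]
    apply Finset.sum_eq_zero
    intro k _
    rw [jordanN_apply, if_neg (by have := k.isLt; omega), zero_mul]

lemma toepl_shift (m : Fin ℓ → K) (i j : Fin ℓ) (hi : (i : ℕ) + 1 < ℓ) (hj : 1 ≤ (j : ℕ)) :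
    toepl m i ⟨(j : ℕ) - 1, lt_of_le_of_lt (Nat.sub_le _ _) j.isLt⟩ =
      toepl m (⟨(i : ℕ) + 1, hi⟩ : Fin ℓ) j := by
  rw [toepl_apply, toepl_apply]
  simp only [Fin.val_mk]
  by_cases hc : (i : ℕ) + 1 ≤ (j : ℕ)
  · rw [if_pos (by omega), if_pos (by omega)]
    exact congrArg _ (Fin.ext (by simp only [Fin.val_mk]; omega))
  · rw [if_neg (by omega), if_neg (by omega)]

lemma mem_of_comm (hℓ : 0 < ℓ) {A : Matrix (Fin ℓ) (Fin ℓ) K}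
    (h : Commute A (jordanN K ℓ)) : ∃ m, A = toepl m := by
  refine ⟨fun k => A ⟨0, hℓ⟩ k, ?_⟩
  have key : ∀ n, ∀ i j : Fin ℓ, (i : ℕ) = n → A i j = toepl (fun k => A ⟨0, hℓ⟩ k) i j := by
    intro n
    induction n with
    | zero =>
      intro i j hi
      have : i = ⟨0, hℓ⟩ := Fin.ext hi
      subst this
      rw [toepl_apply, if_pos (Nat.zero_le _)]
      exact congrArg _ (Fin.ext (by simp))
    | succ n ih =>
      intro i j hi
      have hn : n < ℓ := by have := i.isLt; omega
      have hE := congrFun (congrFun h.eq j) (⟨n, hn⟩ : Fin ℓ)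
      -- h.eq : A * N = N * A ; evaluated at (⟨n⟩, j) :
      have hE' : (A * jordanN K ℓ) (⟨n, hn⟩ : Fin ℓ) j =
          (jordanN K ℓ * A) (⟨n, hn⟩ : Fin ℓ) j := congrFun (congrFun h.eq (⟨n, hn⟩ : Fin ℓ)) j
      rw [mul_jordanN_apply, jordanN_mul_apply, dif_pos (show n + 1 < ℓ by omega)] at hE'
      have hieq : i = ⟨((⟨n, hn⟩ : Fin ℓ) : ℕ) + 1, show ((⟨n, hn⟩ : Fin ℓ) : ℕ) + 1 < ℓ by
          simp only [Fin.val_mk]; omega⟩ := Fin.ext (by simp only [Fin.val_mk]; omega)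
      have hA : A i j = if 1 ≤ (j : ℕ) then
          A ⟨n, hn⟩ ⟨(j : ℕ) - 1, lt_of_le_of_lt (Nat.sub_le _ _) j.isLt⟩ else 0 := by
        rw [hieq]
        exact hE'.symm
      rw [hA]
      by_cases hj : 1 ≤ (j : ℕ)
      · rw [if_pos hj, ih ⟨n, hn⟩ _ rfl,
          toepl_shift _ _ _ (by simp only [Fin.val_mk]; omega) hj]
        exact congrArg (fun z => toepl _ z j) (Fin.ext (by simp only [Fin.val_mk]; omega))
      · rw [if_neg hj, toepl_apply, if_neg (by omega)]
  exact Matrix.ext fun i j => key i i j rfl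

lemma comm_inv {A : Matrix (Fin ℓ) (Fin ℓ) K} (hA : IsUnit A)
    (h : Commute A (jordanN K ℓ)) : Commute A⁻¹ (jordanN K ℓ) := by
  have hd : IsUnit A.det := (Matrix.isUnit_iff_isUnit_det A).mp hA
  have h1 : A⁻¹ * A = 1 := Matrix.nonsing_inv_mul A hd
  have h2 : A * A⁻¹ = 1 := Matrix.mul_nonsing_inv A hd
  unfold Commute SemiconjBy
  calc A⁻¹ * jordanN K ℓ = A⁻¹ * jordanN K ℓ * (A * A⁻¹) := by rw [h2, mul_one]
    _ = A⁻¹ * (jordanN K ℓ * A) * A⁻¹ := by noncomm_ring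
    _ = A⁻¹ * (A * jordanN K ℓ) * A⁻¹ := by rw [← h.eq]
    _ = (A⁻¹ * A) * (jordanN K ℓ * A⁻¹) := by noncomm_ring
    _ = jordanN K ℓ * A⁻¹ := by rw [h1, one_mul]

lemma toepl_blockTriangular (m : Fin ℓ → K) : (toepl m).BlockTriangular id := by
  intro i j hij
  rw [toepl_apply, if_neg (by simpa using Nat.not_le.mpr hij)]

lemma toepl_det' (hℓ : 0 < ℓ) (m : Fin ℓ → K) : (toepl m).det = m ⟨0, hℓ⟩ ^ ℓ := by
  rw [Matrix.det_of_upperTriangular (toepl_blockTriangular m)]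
  have : ∀ i : Fin ℓ, toepl m i i = m ⟨0, hℓ⟩ := by
    intro i
    rw [toepl_apply, if_pos le_rfl]
    congr 1
    exact Fin.ext (by simp)
  rw [Finset.prod_congr rfl (fun i _ => this i)]
  simp [Finset.prod_const]

lemma isUnit_toepl (hℓ : 0 < ℓ) {m : Fin ℓ → K} (hm : m ⟨0, hℓ⟩ ≠ 0) :
    IsUnit (toepl m) := by
  rw [Matrix.isUnit_iff_isUnit_det, toepl_det' hℓ, isUnit_iff_ne_zero]
  exact pow_ne_zero _ hm

lemma toepl_zero_of_isUnit (hℓ : 0 < ℓ) {m : Fin ℓ → K} (hm : IsUnit (toepl m)) :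
    m ⟨0, hℓ⟩ ≠ 0 := by
  intro h0
  have := (Matrix.isUnit_iff_isUnit_det _).mp hm
  rw [toepl_det' hℓ, h0, isUnit_iff_ne_zero] at this
  exact this (zero_pow (by omega))

-- PART 4

lemma offDom_toepl {m : Fin ℓ → K} {a : ℕ}
    (h : ∀ v : Fin ℓ, (v : ℕ) < a → m v = 0) : offDom a (toepl m) := by
  intro i j hj
  rw [toepl_apply]
  by_cases hij : (i : ℕ) ≤ (j : ℕ)
  · rw [if_pos hij]
    exact h _ (by simp only [Fin.val_mk]; omega)
  · rw [if_neg hij]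

lemma toepl_diag_entry (hℓ : 0 < ℓ) (m : Fin ℓ → K) :
    ∀ i j : Fin ℓ, (j : ℕ) = (i : ℕ) + 0 → toepl m i j = m ⟨0, hℓ⟩ := by
  intro i j hij
  rw [toepl_apply, if_pos (by omega)]
  exact congrArg _ (Fin.ext (by simp only [Fin.val_mk]; omega))

lemma toepl_lead_entry (h1 : 1 < ℓ) (m : Fin ℓ → K) :
    ∀ i j : Fin ℓ, (j : ℕ) = (i : ℕ) + 1 → toepl m i j = m ⟨1, h1⟩ := by
  intro i j hij
  rw [toepl_apply, if_pos (by omega)]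
  exact congrArg _ (Fin.ext (by simp only [Fin.val_mk]; omega))

lemma toepl_pow_diag (hℓ : 0 < ℓ) (m : Fin ℓ → K) (p : ℕ) (i : Fin ℓ) :
    ((toepl m) ^ p) i i = m ⟨0, hℓ⟩ ^ p :=
  pow_lead _ (offDom_toepl (fun v hv => absurd hv (by omega))) (toepl_diag_entry hℓ m) p i i
    (by omega)

lemma toepl_pow_lead (h1 : 1 < ℓ) {m : Fin ℓ → K} (h0 : m ⟨0, by omega⟩ = 0) (p : ℕ)
    (i j : Fin ℓ) (hij : (j : ℕ) = (i : ℕ) + p) :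
    ((toepl m) ^ p) i j = m ⟨1, h1⟩ ^ p :=
  pow_lead _ (offDom_toepl (fun v hv => by
      have : v = ⟨0, by omega⟩ := Fin.ext (by simp only [Fin.val_mk]; omega)
      rw [this, h0])) (toepl_lead_entry h1 m) p i j (by omega)

lemma toepl_pow_card (hℓ : 0 < ℓ) {m : Fin ℓ → K} (h0 : m ⟨0, hℓ⟩ = 0) :
    (toepl m) ^ ℓ = 0 := by
  ext i j
  have := offDom_pow (A := toepl m) (a := 1) (offDom_toepl (fun v hv => by
      have : v = ⟨0, hℓ⟩ := Fin.ext (by simp only [Fin.val_mk]; omega)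
      rw [this, h0])) ℓ
  rw [this i j (by have := j.isLt; omega)]
  rfl

lemma toepl_pow_pred_zero (h2 : 2 ≤ ℓ) {m : Fin ℓ → K} (h0 : m ⟨0, by omega⟩ = 0)
    (h1 : m ⟨1, by omega⟩ = 0) : (toepl m) ^ (ℓ - 1) = 0 := by
  ext i j
  have := offDom_pow (A := toepl m) (a := 2) (offDom_toepl (fun v hv => by
      have hv2 : (v : ℕ) = 0 ∨ (v : ℕ) = 1 := by omega
      rcases hv2 with h | h
      · rw [show v = ⟨0, by omega⟩ from Fin.ext (by simpa using h), h0]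
      · rw [show v = ⟨1, by omega⟩ from Fin.ext (by simpa using h), h1])) (ℓ - 1)
  rw [this i j (by have := j.isLt; omega)]
  rfl

/-- The conjugating matrix: columns are `M^(ℓ-1-k)` applied to the last basis vector. -/
def Xmat (hℓ : 0 < ℓ) (M : Matrix (Fin ℓ) (Fin ℓ) K) : Matrix (Fin ℓ) (Fin ℓ) K :=
  Matrix.of fun i k => (M ^ (ℓ - 1 - (k : ℕ))) i ⟨ℓ - 1, by omega⟩

lemma Xmat_apply (hℓ : 0 < ℓ) (M : Matrix (Fin ℓ) (Fin ℓ) K) (i k : Fin ℓ) :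
    Xmat hℓ M i k = (M ^ (ℓ - 1 - (k : ℕ))) i ⟨ℓ - 1, by omega⟩ := rfl

lemma Xmat_mul_jordanN (hℓ : 0 < ℓ) (M : Matrix (Fin ℓ) (Fin ℓ) K) (hM : M ^ ℓ = 0) :
    Xmat hℓ M * jordanN K ℓ = M * Xmat hℓ M := by
  ext i k
  rw [mul_jordanN_apply]
  have hR : (M * Xmat hℓ M) i k = (M ^ (ℓ - (k : ℕ))) i ⟨ℓ - 1, by omega⟩ := by
    have h1 : (M * Xmat hℓ M) i k = (M * M ^ (ℓ - 1 - (k : ℕ))) i ⟨ℓ - 1, by omega⟩ := by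
      rw [Matrix.mul_apply, Matrix.mul_apply]
      rfl
    rw [h1, ← pow_succ']
    have hk := k.isLt
    have he : ℓ - 1 - (k : ℕ) + 1 = ℓ - (k : ℕ) := by omega
    rw [he]
  rw [hR]
  by_cases hk : 1 ≤ (k : ℕ)
  · rw [if_pos hk, Xmat_apply]
    have hk2 := k.isLt
    simp only [Fin.val_mk]
    have he : ℓ - 1 - ((k : ℕ) - 1) = ℓ - (k : ℕ) := by omega
    rw [he]
  · rw [if_neg hk]
    have : ℓ - (k : ℕ) = ℓ := by omega
    rw [this, hM]
    rfl

lemma Xmat_offDom (hℓ : 0 < ℓ) {M : Matrix (Fin ℓ) (Fin ℓ) K} (hM : offDom 1 M) :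
    offDom 0 (Xmat hℓ M) := by
  intro i k hk
  rw [Xmat_apply]
  refine offDom_pow hM (ℓ - 1 - (k : ℕ)) i _ ?_
  simp only [Fin.val_mk, mul_one]
  have := i.isLt
  have := k.isLt
  omega

lemma Xmat_diag (hℓ : 0 < ℓ) {M : Matrix (Fin ℓ) (Fin ℓ) K} (hM : offDom 1 M) (c : K)
    (hc : ∀ i j : Fin ℓ, (j : ℕ) = (i : ℕ) + 1 → M i j = c) (i : Fin ℓ) :
    Xmat hℓ M i i = c ^ (ℓ - 1 - (i : ℕ)) := by
  rw [Xmat_apply]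
  refine pow_lead c hM hc _ i _ ?_
  simp only [Fin.val_mk, mul_one]
  have := i.isLt
  omega

lemma Xmat_isUnit (hℓ : 0 < ℓ) {M : Matrix (Fin ℓ) (Fin ℓ) K} (hM : offDom 1 M) (c : K)
    (hc : ∀ i j : Fin ℓ, (j : ℕ) = (i : ℕ) + 1 → M i j = c) (hc0 : c ≠ 0) :
    IsUnit (Xmat hℓ M) := by
  rw [Matrix.isUnit_iff_isUnit_det,
    Matrix.det_of_upperTriangular (fun i j h => Xmat_offDom hℓ hM i j (by simpa using h)),
    isUnit_iff_ne_zero]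
  refine Finset.prod_ne_zero_iff.mpr fun i _ => ?_
  rw [Xmat_diag hℓ hM c hc]
  exact pow_ne_zero _ hc0

-- PART 5

lemma toepl_delta0 (hℓ : 0 < ℓ) :
    toepl (fun k : Fin ℓ => if (k : ℕ) = 0 then (1 : K) else 0) = 1 := by
  ext i j
  rw [toepl_apply, Matrix.one_apply]
  by_cases h : (i : ℕ) ≤ (j : ℕ)
  · rw [if_pos h]
    simp only [Fin.val_mk]
    by_cases h2 : (j : ℕ) - (i : ℕ) = 0
    · rw [if_pos h2, if_pos (Fin.ext (by omega))]
    · rw [if_neg h2, if_neg (fun hh => h2 (by rw [hh]; omega))]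
  · rw [if_neg h, if_neg (fun hh => h (by rw [hh]))]

lemma toepl_delta1 (hℓ : 0 < ℓ) :
    toepl (fun k : Fin ℓ => if (k : ℕ) = 1 then (1 : K) else 0) = jordanN K ℓ := by
  ext i j
  rw [toepl_apply, jordanN_apply]
  by_cases h : (i : ℕ) ≤ (j : ℕ)
  · rw [if_pos h]
    simp only [Fin.val_mk]
    by_cases h2 : (j : ℕ) - (i : ℕ) = 1
    · rw [if_pos h2, if_pos (by omega)]
    · rw [if_neg h2, if_neg (by omega)]
  · rw [if_neg h, if_neg (by omega)]

lemma mul_cancel_units {X Q A B : Matrix (Fin ℓ) (Fin ℓ) K} (hX : IsUnit X) (hQ : IsUnit Q)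
    (h : X * A * Q = X * B * Q) : A = B := by
  have hdX := (Matrix.isUnit_iff_isUnit_det X).mp hX
  have hdQ := (Matrix.isUnit_iff_isUnit_det Q).mp hQ
  have h2 := congrArg (fun C => X⁻¹ * C * Q⁻¹) h
  simpa [Matrix.mul_assoc, Matrix.nonsing_inv_mul_cancel_left _ _ hdX,
    Matrix.mul_nonsing_inv_cancel_right _ _ hdQ] using h2

lemma intertwine_pow {X M : Matrix (Fin ℓ) (Fin ℓ) K}
    (hXN : X * jordanN K ℓ = M * X) (k : ℕ) :
    X * (jordanN K ℓ) ^ k = M ^ k * X := by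
  induction k with
  | zero => simp
  | succ k ih =>
    rw [pow_succ, pow_succ, ← Matrix.mul_assoc, ih, Matrix.mul_assoc, hXN, Matrix.mul_assoc]

lemma conj_toepl {X M : Matrix (Fin ℓ) (Fin ℓ) K} (hX : IsUnit X)
    (hXN : X * jordanN K ℓ = M * X) (a : Fin ℓ → K) :
    X * toepl a * X⁻¹ = ∑ k : Fin ℓ, a k • M ^ (k : ℕ) := by
  have hdX := (Matrix.isUnit_iff_isUnit_det X).mp hX
  rw [toepl_eq_sum, Finset.mul_sum, Finset.sum_mul]
  refine Finset.sum_congr rfl fun k _ => ?_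
  rw [mul_smul_comm, smul_mul_assoc, intertwine_pow hXN, Matrix.mul_assoc,
    Matrix.mul_nonsing_inv _ hdX, Matrix.mul_one]

lemma comm_sum_pow {M : Matrix (Fin ℓ) (Fin ℓ) K} (hM : Commute M (jordanN K ℓ))
    (a : Fin ℓ → K) :
    Commute (∑ k : Fin ℓ, a k • M ^ (k : ℕ)) (jordanN K ℓ) :=
  Commute.sum_left _ _ _ fun k _ => ((hM.pow_left _).smul_left _)

lemma image_T_eq [Fintype K] (hℓ : 0 < ℓ) {X Q M : Matrix (Fin ℓ) (Fin ℓ) K}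
    (hX : IsUnit X) (hQ : IsUnit Q)
    (hXN : X * jordanN K ℓ = M * X) (hM : Commute M (jordanN K ℓ))
    (hXQ : Commute (X * Q) (jordanN K ℓ)) :
    (fun A => X * A * Q) '' Set.range (toepl : (Fin ℓ → K) → _)
      = Set.range (toepl : (Fin ℓ → K) → _) := by
  have hdX := (Matrix.isUnit_iff_isUnit_det X).mp hX
  have hfin : (Set.range (toepl : (Fin ℓ → K) → _)).Finite := Set.toFinite _
  have hinj : Set.InjOn (fun A => X * A * Q) (Set.range (toepl : (Fin ℓ → K) → _)) :=
    fun A _ B _ h => mul_cancel_units hX hQ h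
  refine Set.eq_of_subset_of_ncard_le ?_ (Set.ncard_image_of_injOn hinj).ge hfin
  rintro B ⟨A, ⟨a, rfl⟩, rfl⟩
  have key : X * toepl a * Q = (∑ k : Fin ℓ, a k • M ^ (k : ℕ)) * (X * Q) := by
    rw [← conj_toepl hX hXN a, Matrix.mul_assoc, Matrix.mul_assoc,
      Matrix.nonsing_inv_mul_cancel_left _ _ hdX, ← Matrix.mul_assoc]
  simp only []
  rw [key]
  obtain ⟨b, hb⟩ := mem_of_comm hℓ ((comm_sum_pow hM a).mul_left hXQ)
  exact ⟨b, hb.symm⟩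

-- PART 6

lemma card_ne_zero [Fintype K] : Nat.card {x : K // x ≠ 0} = Fintype.card K - 1 := by
  rw [← Nat.card_congr (unitsEquivNeZero (G₀ := K)), Nat.card_units, Nat.card_eq_fintype_card]

lemma card_one_constraint [Fintype K] (n : ℕ) :
    Nat.card {s : Fin (n + 2) → K // s ⟨0, by omega⟩ ≠ 0}
      = Fintype.card K ^ (n + 1) * (Fintype.card K - 1) := by
  have e : {s : Fin (n + 2) → K // s ⟨0, by omega⟩ ≠ 0} ≃ (Fin (n + 1) → K) × {x : K // x ≠ 0} := by
    refine Equiv.ofBijective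
      (fun s => (fun i => s.1 ⟨(i : ℕ) + 1, by omega⟩, ⟨s.1 ⟨0, by omega⟩, s.2⟩)) ⟨?_, ?_⟩
    · rintro ⟨s, hs⟩ ⟨u, hu⟩ h
      obtain ⟨h1, h2⟩ := Prod.mk.injEq .. ▸ h
      refine Subtype.ext (funext fun j => ?_)
      by_cases hj : (j : ℕ) = 0
      · have : j = ⟨0, by omega⟩ := Fin.ext hj
        rw [this]
        exact congrArg Subtype.val h2
      · have hj1 : (j : ℕ) - 1 < n + 1 := by have := j.isLt; omega
        have := congrFun h1 ⟨(j : ℕ) - 1, hj1⟩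
        simp only [Fin.val_mk] at this
        have hjeq : j = ⟨(j : ℕ) - 1 + 1, by omega⟩ := Fin.ext (by simp only [Fin.val_mk]; omega)
        rw [hjeq]
        exact this
    · rintro ⟨f, x, hx⟩
      refine ⟨⟨fun j => if hj : (j : ℕ) = 0 then x else f ⟨(j : ℕ) - 1, by have := j.isLt; omega⟩,
        by simpa using hx⟩, ?_⟩
      simp only [Prod.mk.injEq]
      constructor
      · funext i
        have : ((⟨(i : ℕ) + 1, by omega⟩ : Fin (n + 2)) : ℕ) ≠ 0 := by simp
        rw [dif_neg this]
        exact congrArg f (Fin.ext (by simp))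
      · exact Subtype.ext (by simp)
  rw [Nat.card_congr e, Nat.card_prod, Nat.card_fun, Nat.card_eq_fintype_card,
    Nat.card_eq_fintype_card, Fintype.card_fin, card_ne_zero]

lemma card_two_constraint [Fintype K] (n : ℕ) :
    Nat.card {m : Fin (n + 2) → K // m ⟨0, by omega⟩ = 0 ∧ m ⟨1, by omega⟩ ≠ 0}
      = Fintype.card K ^ n * (Fintype.card K - 1) := by
  have e : {m : Fin (n + 2) → K // m ⟨0, by omega⟩ = 0 ∧ m ⟨1, by omega⟩ ≠ 0}
      ≃ (Fin n → K) × {x : K // x ≠ 0} := by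
    refine Equiv.ofBijective
      (fun s => (fun i => s.1 ⟨(i : ℕ) + 2, by omega⟩, ⟨s.1 ⟨1, by omega⟩, s.2.2⟩)) ⟨?_, ?_⟩
    · rintro ⟨s, hs0, hs1⟩ ⟨u, hu0, hu1⟩ h
      obtain ⟨h1, h2⟩ := Prod.mk.injEq .. ▸ h
      refine Subtype.ext (funext fun j => ?_)
      by_cases hj0 : (j : ℕ) = 0
      · have : j = ⟨0, by omega⟩ := Fin.ext hj0
        rw [this]
        exact hs0.trans hu0.symm
      · by_cases hj1 : (j : ℕ) = 1
        · have : j = ⟨1, by omega⟩ := Fin.ext hj1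
          rw [this]
          exact congrArg Subtype.val h2
        · have hj2 : (j : ℕ) - 2 < n := by have := j.isLt; omega
          have := congrFun h1 ⟨(j : ℕ) - 2, hj2⟩
          simp only [Fin.val_mk] at this
          have hjeq : j = ⟨(j : ℕ) - 2 + 2, by omega⟩ :=
            Fin.ext (by simp only [Fin.val_mk]; omega)
          rw [hjeq]
          exact this
    · rintro ⟨f, x, hx⟩
      refine ⟨⟨fun j => if hj : (j : ℕ) = 0 then 0 else if hj1 : (j : ℕ) = 1 then x
        else f ⟨(j : ℕ) - 2, by have := j.isLt; omega⟩, by simp, by simpa using hx⟩, ?_⟩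
      simp only [Prod.mk.injEq]
      constructor
      · funext i
        have h0 : ((⟨(i : ℕ) + 2, by omega⟩ : Fin (n + 2)) : ℕ) ≠ 0 := by simp
        have h1 : ((⟨(i : ℕ) + 2, by omega⟩ : Fin (n + 2)) : ℕ) ≠ 1 := by simp
        rw [dif_neg h0, dif_neg h1]
        exact congrArg f (Fin.ext (by simp))
      · exact Subtype.ext (by simp)
  rw [Nat.card_congr e, Nat.card_prod, Nat.card_fun, Nat.card_eq_fintype_card,
    Nat.card_eq_fintype_card, Fintype.card_fin, card_ne_zero]

-- PART 7 : the main bijection and theorem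
lemma forward [Fintype K] (h0 : 0 < ℓ) (h2 : 2 ≤ ℓ) {m s t : Fin ℓ → K}
    (hm0 : m ⟨0, h0⟩ = 0) (hm1 : m ⟨1, by omega⟩ ≠ 0)
    (hs : s ⟨0, h0⟩ ≠ 0) (ht : t ⟨0, h0⟩ ≠ 0) :
    IsUnit (Xmat h0 (toepl m) * toepl s)
    ∧ IsUnit ((Xmat h0 (toepl m) * toepl s)⁻¹ * toepl t)
    ∧ (Xmat h0 (toepl m) * toepl s) * jordanN K ℓ
        = toepl m * (Xmat h0 (toepl m) * toepl s)
    ∧ (fun A => (Xmat h0 (toepl m) * toepl s) * A *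
          ((Xmat h0 (toepl m) * toepl s)⁻¹ * toepl t)) ''
        Set.range (toepl : (Fin ℓ → K) → _) = Set.range (toepl : (Fin ℓ → K) → _) := by
  have h1 : 1 < ℓ := by omega
  have hod : offDom 1 (toepl m) := offDom_toepl (fun v hv => by
    have hv0 : v = ⟨0, h0⟩ := Fin.ext (by simp only [Fin.val_mk]; omega)
    rw [hv0]; exact hm0)
  have hmu : IsUnit (Xmat h0 (toepl m)) :=
    Xmat_isUnit h0 hod (m ⟨1, h1⟩) (toepl_lead_entry h1 m) hm1
  have hsu : IsUnit (toepl s) := isUnit_toepl h0 hs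
  have hXu : IsUnit (Xmat h0 (toepl m) * toepl s) := hmu.mul hsu
  have hdX := (Matrix.isUnit_iff_isUnit_det _).mp hXu
  have hXN : (Xmat h0 (toepl m) * toepl s) * jordanN K ℓ
      = toepl m * (Xmat h0 (toepl m) * toepl s) := by
    rw [Matrix.mul_assoc, (toepl_commute s).eq, ← Matrix.mul_assoc,
      Xmat_mul_jordanN h0 _ (toepl_pow_card h0 hm0), Matrix.mul_assoc]
  have hQu : IsUnit ((Xmat h0 (toepl m) * toepl s)⁻¹ * toepl t) :=
    (Matrix.isUnit_nonsing_inv_iff.mpr hXu).mul (isUnit_toepl h0 ht)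
  have hXQ : (Xmat h0 (toepl m) * toepl s) *
      ((Xmat h0 (toepl m) * toepl s)⁻¹ * toepl t) = toepl t :=
    Matrix.mul_nonsing_inv_cancel_left _ _ hdX
  exact ⟨hXu, hQu, hXN,
    image_T_eq h0 hXu hQu hXN (toepl_commute m) (by rw [hXQ]; exact toepl_commute t)⟩

end Stmt12

open Stmt12

theorem stmt12 [Fintype K] (ℓ : ℕ) (hℓ : 2 ≤ ℓ) :
    Nat.card {p : Matrix (Fin ℓ) (Fin ℓ) K × Matrix (Fin ℓ) (Fin ℓ) K //
        IsUnit p.1 ∧ IsUnit p.2 ∧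
        (fun A => p.1ᵀ * A * p.2) ''
            Set.range (toepl : (Fin ℓ → K) → Matrix (Fin ℓ) (Fin ℓ) K)
          = Set.range (toepl : (Fin ℓ → K) → Matrix (Fin ℓ) (Fin ℓ) K)}
      = Fintype.card K ^ (3 * ℓ - 4) * (Fintype.card K - 1) ^ 3 := by
  obtain ⟨n, rfl⟩ : ∃ n, ℓ = n + 2 := ⟨ℓ - 2, by omega⟩
  have h0 : 0 < n + 2 := by omega
  have h1 : 1 < n + 2 := by omega
  let F : ({m : Fin (n + 2) → K // m ⟨0, h0⟩ = 0 ∧ m ⟨1, h1⟩ ≠ 0} ×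
      {s : Fin (n + 2) → K // s ⟨0, h0⟩ ≠ 0} × {t : Fin (n + 2) → K // t ⟨0, h0⟩ ≠ 0}) →
      {p : Matrix (Fin (n + 2)) (Fin (n + 2)) K × Matrix (Fin (n + 2)) (Fin (n + 2)) K //
        IsUnit p.1 ∧ IsUnit p.2 ∧
        (fun A => p.1ᵀ * A * p.2) ''
            Set.range (toepl : (Fin (n + 2) → K) → Matrix (Fin (n + 2)) (Fin (n + 2)) K)
          = Set.range (toepl : (Fin (n + 2) → K) → Matrix (Fin (n + 2)) (Fin (n + 2)) K)} :=
    fun x =>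
      ⟨((Xmat h0 (toepl x.1.1) * toepl x.2.1.1)ᵀ,
        (Xmat h0 (toepl x.1.1) * toepl x.2.1.1)⁻¹ * toepl x.2.2.1), by
        obtain ⟨hXu, hQu, hXN, him⟩ :=
          forward h0 (by omega) x.1.2.1 x.1.2.2 x.2.1.2 x.2.2.2
        refine ⟨(Matrix.isUnit_iff_isUnit_det _).mpr ?_, hQu, ?_⟩
        · rw [Matrix.det_transpose]
          exact (Matrix.isUnit_iff_isUnit_det _).mp hXu
        · simpa only [Matrix.transpose_transpose] using him⟩
  have hFbij : Function.Bijective F := by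
    constructor
    · rintro ⟨⟨m, hm⟩, ⟨s, hs⟩, ⟨t, ht⟩⟩ ⟨⟨m', hm'⟩, ⟨s', hs'⟩, ⟨t', ht'⟩⟩ h
      obtain ⟨hXu, hQu, hXN, -⟩ := forward h0 (by omega) hm.1 hm.2 hs ht
      obtain ⟨hXu', hQu', hXN', -⟩ := forward h0 (by omega) hm'.1 hm'.2 hs' ht'
      have hdX := (Matrix.isUnit_iff_isUnit_det _).mp hXu
      have hdX' := (Matrix.isUnit_iff_isUnit_det _).mp hXu'
      have hpair : ((Xmat h0 (toepl m) * toepl s)ᵀ,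
            (Xmat h0 (toepl m) * toepl s)⁻¹ * toepl t)
          = ((Xmat h0 (toepl m') * toepl s')ᵀ,
            (Xmat h0 (toepl m') * toepl s')⁻¹ * toepl t') := congrArg Subtype.val h
      have hP := congrArg Prod.fst hpair
      have hQe := congrArg Prod.snd hpair
      simp only at hP hQe
      have hX : Xmat h0 (toepl m) * toepl s = Xmat h0 (toepl m') * toepl s' := by
        have h3 := congrArg Matrix.transpose hP
        simpa only [Matrix.transpose_transpose] using h3
      have ht_eq : toepl t = toepl t' := by
        calc toepl t = (Xmat h0 (toepl m) * toepl s) *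
              ((Xmat h0 (toepl m) * toepl s)⁻¹ * toepl t) :=
            (Matrix.mul_nonsing_inv_cancel_left _ _ hdX).symm
          _ = (Xmat h0 (toepl m') * toepl s') *
              ((Xmat h0 (toepl m') * toepl s')⁻¹ * toepl t') := by rw [hQe, hX]
          _ = toepl t' := Matrix.mul_nonsing_inv_cancel_left _ _ hdX'
      have hm_eq : toepl m = toepl m' := by
        have e1 : toepl m * (Xmat h0 (toepl m) * toepl s)
            = toepl m' * (Xmat h0 (toepl m) * toepl s) := by
          calc toepl m * (Xmat h0 (toepl m) * toepl s)
              = (Xmat h0 (toepl m) * toepl s) * jordanN K (n + 2) := hXN.symm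
            _ = (Xmat h0 (toepl m') * toepl s') * jordanN K (n + 2) := by rw [hX]
            _ = toepl m' * (Xmat h0 (toepl m') * toepl s') := hXN'
            _ = toepl m' * (Xmat h0 (toepl m) * toepl s) := by rw [← hX]
        have e2 := congrArg (fun Z => Z * (Xmat h0 (toepl m) * toepl s)⁻¹) e1
        simpa only [Matrix.mul_nonsing_inv_cancel_right _ _ hdX] using e2
      obtain rfl : m = m' := toepl_injective h0 hm_eq
      have hod : offDom 1 (toepl m) := offDom_toepl (fun v hv => by
        have hv0 : v = ⟨0, h0⟩ := Fin.ext (by simp only [Fin.val_mk]; omega)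
        rw [hv0]; exact hm.1)
      have hXmu : IsUnit (Xmat h0 (toepl m)) :=
        Xmat_isUnit h0 hod (m ⟨1, h1⟩) (toepl_lead_entry h1 m) hm.2
      have hdXm := (Matrix.isUnit_iff_isUnit_det _).mp hXmu
      have hs_eq : toepl s = toepl s' := by
        have e3 := congrArg (fun Z => (Xmat h0 (toepl m))⁻¹ * Z) hX
        simpa only [Matrix.nonsing_inv_mul_cancel_left _ _ hdXm] using e3
      obtain rfl : s = s' := toepl_injective h0 hs_eq
      obtain rfl : t = t' := toepl_injective h0 ht_eq
      rfl
    · rintro ⟨⟨P, Q⟩, hPu, hQu, hIm⟩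
      dsimp only at hPu hQu hIm
      have hXu : IsUnit Pᵀ := (Matrix.isUnit_iff_isUnit_det _).mpr (by
        rw [Matrix.det_transpose]
        exact (Matrix.isUnit_iff_isUnit_det _).mp hPu)
      have hdX := (Matrix.isUnit_iff_isUnit_det Pᵀ).mp hXu
      have hdQ := (Matrix.isUnit_iff_isUnit_det Q).mp hQu
      have hsub : ∀ a : Fin (n + 2) → K, ∃ b, Pᵀ * toepl a * Q = toepl b := by
        intro a
        have hmem : Pᵀ * toepl a * Q ∈ (fun A => Pᵀ * A * Q) ''
            Set.range (toepl : (Fin (n + 2) → K) → _) := ⟨toepl a, ⟨a, rfl⟩, rfl⟩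
        rw [hIm] at hmem
        obtain ⟨b, hb⟩ := hmem
        exact ⟨b, hb.symm⟩
      obtain ⟨t, hts⟩ : ∃ b, Pᵀ * Q = toepl b := by
        have h4 := hsub (fun k => if (k : ℕ) = 0 then 1 else 0)
        rwa [toepl_delta0 h0, Matrix.mul_one] at h4
      have hSu : IsUnit (Pᵀ * Q) := hXu.mul hQu
      have hStu : IsUnit (toepl t) := by rw [← hts]; exact hSu
      have ht0 : t ⟨0, h0⟩ ≠ 0 := toepl_zero_of_isUnit h0 hStu
      obtain ⟨u, hu⟩ : ∃ b, Pᵀ * jordanN K (n + 2) * Q = toepl b := by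
        have h4 := hsub (fun k => if (k : ℕ) = 1 then 1 else 0)
        rwa [toepl_delta1 h0] at h4
      have hXN : Pᵀ * jordanN K (n + 2) = toepl u * (toepl t)⁻¹ * Pᵀ := by
        rw [← hts, Matrix.mul_inv_rev, ← hu]
        simp only [Matrix.mul_assoc]
        rw [Matrix.nonsing_inv_mul _ hdX, Matrix.mul_one, Matrix.mul_nonsing_inv _ hdQ,
          Matrix.mul_one]
      have hMcomm : Commute (toepl u * (toepl t)⁻¹) (jordanN K (n + 2)) :=
        Commute.mul_left (toepl_commute u) (comm_inv hStu (toepl_commute t))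
      obtain ⟨m, hm⟩ := mem_of_comm h0 hMcomm
      have hXNm : Pᵀ * jordanN K (n + 2) = toepl m * Pᵀ := by rw [hXN, ← hm]
      have hpow : (toepl m) ^ (n + 2) = 0 := by
        have h5 := intertwine_pow hXNm (n + 2)
        rw [jordanN_pow_card, Matrix.mul_zero] at h5
        have h6 := congrArg (fun Z => Z * (Pᵀ)⁻¹) h5.symm
        simpa only [Matrix.mul_nonsing_inv_cancel_right _ _ hdX, Matrix.zero_mul] using h6
      have hm0 : m ⟨0, h0⟩ = 0 := by
        have h7 := toepl_pow_diag h0 m (n + 2) ⟨0, h0⟩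
        rw [hpow] at h7
        have h8 : m ⟨0, h0⟩ ^ (n + 2) = 0 := by simpa using h7.symm
        exact pow_eq_zero_iff (by omega) |>.mp h8
      have hm1 : m ⟨1, h1⟩ ≠ 0 := by
        intro hco
        have hz : (toepl m) ^ (n + 2 - 1) = 0 := toepl_pow_pred_zero (by omega) hm0 hco
        have h9 := intertwine_pow hXNm (n + 2 - 1)
        rw [hz, Matrix.zero_mul] at h9
        have h10 : (jordanN K (n + 2)) ^ (n + 2 - 1) = 0 := by
          have h11 := congrArg (fun Z => (Pᵀ)⁻¹ * Z) h9
          simpa only [Matrix.nonsing_inv_mul_cancel_left _ _ hdX, Matrix.mul_zero] using h11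
        exact jordanN_pow_pred h0 h10
      have hod : offDom 1 (toepl m) := offDom_toepl (fun v hv => by
        have hv0 : v = ⟨0, h0⟩ := Fin.ext (by simp only [Fin.val_mk]; omega)
        rw [hv0]; exact hm0)
      have hXmu : IsUnit (Xmat h0 (toepl m)) :=
        Xmat_isUnit h0 hod (m ⟨1, h1⟩) (toepl_lead_entry h1 m) hm1
      have hdXm := (Matrix.isUnit_iff_isUnit_det _).mp hXmu
      have hXmN : Xmat h0 (toepl m) * jordanN K (n + 2)
          = toepl m * Xmat h0 (toepl m) := Xmat_mul_jordanN h0 _ (toepl_pow_card h0 hm0)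
      have e1 : jordanN K (n + 2) * (Xmat h0 (toepl m))⁻¹
          = (Xmat h0 (toepl m))⁻¹ * toepl m := by
        have h12 := congrArg
          (fun Z => (Xmat h0 (toepl m))⁻¹ * Z * (Xmat h0 (toepl m))⁻¹) hXmN
        simp only [Matrix.mul_assoc] at h12
        rw [Matrix.nonsing_inv_mul_cancel_left _ _ hdXm, Matrix.mul_nonsing_inv _ hdXm,
          Matrix.mul_one] at h12
        exact h12
      have hCcomm : Commute ((Xmat h0 (toepl m))⁻¹ * Pᵀ) (jordanN K (n + 2)) := by
        show (Xmat h0 (toepl m))⁻¹ * Pᵀ * jordanN K (n + 2)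
          = jordanN K (n + 2) * ((Xmat h0 (toepl m))⁻¹ * Pᵀ)
        calc (Xmat h0 (toepl m))⁻¹ * Pᵀ * jordanN K (n + 2)
            = (Xmat h0 (toepl m))⁻¹ * (Pᵀ * jordanN K (n + 2)) := Matrix.mul_assoc _ _ _
          _ = (Xmat h0 (toepl m))⁻¹ * (toepl m * Pᵀ) := by rw [hXNm]
          _ = ((Xmat h0 (toepl m))⁻¹ * toepl m) * Pᵀ := (Matrix.mul_assoc _ _ _).symm
          _ = (jordanN K (n + 2) * (Xmat h0 (toepl m))⁻¹) * Pᵀ := by rw [← e1]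
          _ = jordanN K (n + 2) * ((Xmat h0 (toepl m))⁻¹ * Pᵀ) := Matrix.mul_assoc _ _ _
      obtain ⟨s, hsm⟩ := mem_of_comm h0 hCcomm
      have hCu : IsUnit ((Xmat h0 (toepl m))⁻¹ * Pᵀ) :=
        (Matrix.isUnit_nonsing_inv_iff.mpr hXmu).mul hXu
      have hs0 : s ⟨0, h0⟩ ≠ 0 := toepl_zero_of_isUnit h0 (by rw [← hsm]; exact hCu)
      have hXeq : Xmat h0 (toepl m) * toepl s = Pᵀ := by
        rw [← hsm, Matrix.mul_nonsing_inv_cancel_left _ _ hdXm]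
      refine ⟨⟨⟨m, hm0, hm1⟩, ⟨s, hs0⟩, ⟨t, ht0⟩⟩, ?_⟩
      apply Subtype.ext
      show ((Xmat h0 (toepl m) * toepl s)ᵀ, (Xmat h0 (toepl m) * toepl s)⁻¹ * toepl t)
        = (P, Q)
      rw [hXeq]
      have hq : (Pᵀ)⁻¹ * toepl t = Q := by
        rw [← hts, Matrix.nonsing_inv_mul_cancel_left _ _ hdX]
      rw [hq, Matrix.transpose_transpose]
  rw [← Nat.card_congr (Equiv.ofBijective F hFbij), Nat.card_prod, Nat.card_prod,
    card_two_constraint n, card_one_constraint n]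
  have harith : 3 * (n + 2) - 4 = n + ((n + 1) + (n + 1)) := by omega
  rw [harith, pow_add, pow_add]
  ring
end

section
/- Let T_{p,q,r} = {A ⊗ I_q : A ∈ M_{p,r}(K)} ⊆ M_{pq,qr}(K). For the action M·(X,Y) = XᵀMY of GL_{pq}(K) × GL_{qr}(K), the setwise stabilizer of T_{p,q,r} is exactly the set of pairs (P ⊗ Rᵀ, Q ⊗ R^{-1}) with P ∈ GL_p(K), Q ∈ GL_r(K), R ∈ GL_q(K). -/
open Matrix Kronecker

variable {K : Type*} [Field K]

theorem aux_commutant {a b q : ℕ} (hq : 1 ≤ q) (Z : Matrix (Fin a × Fin q) (Fin b × Fin q) K)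
    (h : ∀ N : Matrix (Fin q) (Fin q) K,
      (1 : Matrix (Fin a) (Fin a) K) ⊗ₖ N * Z = Z * ((1 : Matrix (Fin b) (Fin b) K) ⊗ₖ N)) :
    ∃ C : Matrix (Fin a) (Fin b) K, Z = C ⊗ₖ (1 : Matrix (Fin q) (Fin q) K) := by
  set a0 : Fin q := ⟨0, hq⟩ with ha0
  have key : ∀ (c d : Fin q) (i : Fin a) (j : Fin b) (a' b' : Fin q),
      (if c = a' then Z (i, d) (j, b') else 0) = (if d = b' then Z (i, a') (j, c) else 0) := by
    intro c d i j a' b'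
    have h2 := congrFun (congrFun (h (Matrix.single c d 1)) (i, a')) (j, b')
    simpa [Matrix.mul_apply, Fintype.sum_prod_type, Matrix.single, Matrix.one_apply,
      ite_and, Finset.sum_ite_eq, Finset.sum_ite_eq', mul_comm] using h2
  refine ⟨Matrix.of fun i j => Z (i, a0) (j, a0), ?_⟩
  ext ⟨i, a'⟩ ⟨j, b'⟩
  simp only [kroneckerMap_apply, Matrix.of_apply, Matrix.one_apply]
  rcases eq_or_ne a' b' with rfl | hne
  · have h3 := key a' a0 i j a' a0
    simp at h3
    simp [h3]
  · have h3 := key a' a' i j a' b'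
    simp [hne] at h3
    simp [hne, h3]

theorem aux_blocks {p q r : ℕ} (hp : 1 ≤ p) (hr : 1 ≤ r)
    (U : Matrix (Fin p × Fin q) (Fin p × Fin q) K)
    (V : Matrix (Fin r × Fin q) (Fin r × Fin q) K)
    (h : ∀ A : Matrix (Fin p) (Fin r) K,
      U * (A ⊗ₖ (1 : Matrix (Fin q) (Fin q) K)) = (A ⊗ₖ (1 : Matrix (Fin q) (Fin q) K)) * V) :
    ∃ W : Matrix (Fin q) (Fin q) K,
      U = (1 : Matrix (Fin p) (Fin p) K) ⊗ₖ W ∧ V = (1 : Matrix (Fin r) (Fin r) K) ⊗ₖ W := by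
  set j0 : Fin r := ⟨0, hr⟩ with hj0
  set i0 : Fin p := ⟨0, hp⟩ with hi0
  have key : ∀ (k : Fin p) (m : Fin r) (i : Fin p) (j : Fin r) (a b : Fin q),
      (if m = j then U (i, a) (k, b) else 0) = (if k = i then V (m, a) (j, b) else 0) := by
    intro k m i j a b
    have h2 := congrFun (congrFun (h (Matrix.single k m 1)) (i, a)) (j, b)
    simpa [Matrix.mul_apply, Fintype.sum_prod_type, Matrix.single, Matrix.one_apply,
      ite_and, Finset.sum_ite_eq, Finset.sum_ite_eq', mul_comm] using h2
  refine ⟨Matrix.of fun a b => V (j0, a) (j0, b), ?_, ?_⟩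
  · ext ⟨i, a⟩ ⟨k, b⟩
    have h3 := key k j0 i j0 a b
    simp only [if_pos rfl] at h3
    simp only [kroneckerMap_apply, Matrix.of_apply, Matrix.one_apply]
    rcases eq_or_ne i k with rfl | hne
    · simpa using h3
    · rw [if_neg (Ne.symm hne)] at h3
      simp only [if_true] at h3
      simp [hne, h3]
  · ext ⟨m, a⟩ ⟨j, b⟩
    have h3 := key i0 m i0 j a b
    rw [if_pos rfl] at h3
    have h4 := key i0 j0 i0 j0 a b
    rw [if_pos rfl, if_pos rfl] at h4
    simp only [kroneckerMap_apply, Matrix.of_apply, Matrix.one_apply]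
    rcases eq_or_ne m j with rfl | hne
    · rw [if_pos rfl] at h3
      simp [← h3, ← h4]
    · rw [if_neg hne] at h3
      simp [hne, ← h3]

theorem aux_inner {q : ℕ} (hq : 1 ≤ q) (W : Matrix (Fin q) (Fin q) K → Matrix (Fin q) (Fin q) K)
    (hadd : ∀ M N, W (M + N) = W M + W N)
    (hsmul : ∀ (c : K) N, W (c • N) = c • W N)
    (hmul : ∀ M N, W (M * N) = W M * W N)
    (hinj : ∀ N, W N = 0 → N = 0) :
    ∃ S : Matrix (Fin q) (Fin q) K, IsUnit S ∧ ∀ N, W N * S = S * N := by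
  classical
  set a0 : Fin q := ⟨0, hq⟩ with ha0
  set E : Matrix (Fin q) (Fin q) K := Matrix.single a0 a0 1 with hE
  have hEE : E * E = E := by simp [hE, Matrix.single_mul_single_same]
  have hWE : W E ≠ 0 := by
    intro h
    have : E = 0 := hinj E h
    have := congrFun (congrFun this a0) a0
    simp [hE, Matrix.single] at this
  obtain ⟨x0, c0, hc0⟩ : ∃ x c, W E x c ≠ 0 := by
    by_contra h
    push_neg at h
    exact hWE (by ext i j; simpa using h i j)
  set u : Fin q → K := W E *ᵥ Pi.single c0 1 with hu
  have hu0 : u ≠ 0 := by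
    intro h
    have := congrFun h x0
    simp [hu, Matrix.mulVec_single] at this
    exact hc0 this
  have hW0 : W 0 = 0 := by simpa using hsmul 0 0
  have hsum : ∀ (f : Fin q → Matrix (Fin q) (Fin q) K),
      W (∑ i, f i) = ∑ i, W (f i) := by
    intro f
    induction (Finset.univ : Finset (Fin q)) using Finset.induction with
    | empty => simpa using hW0
    | insert a s h ih => rw [Finset.sum_insert h, hadd, ih, Finset.sum_insert h]
  have huE : W E *ᵥ u = u := by
    rw [hu, mulVec_mulVec, ← hmul, hEE]
  set S : Matrix (Fin q) (Fin q) K :=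
    Matrix.of (fun x y => (W (Matrix.single y a0 1) *ᵥ u) x) with hS
  have hdecomp : ∀ (N : Matrix (Fin q) (Fin q) K) (y : Fin q),
      N * Matrix.single y a0 1 = ∑ z, N z y • Matrix.single z a0 1 := by
    intro N y
    ext i j
    simp [Matrix.mul_apply, Matrix.single, Matrix.sum_apply, ite_and,
      Finset.sum_ite_eq, Finset.sum_ite_eq', mul_comm]
  have hWS : ∀ N, W N * S = S * N := by
    intro N
    ext x y
    have e1 : (W N * S) x y = ((W N * W (Matrix.single y a0 1)) *ᵥ u) x := by
      simp only [Matrix.mul_apply, hS, of_apply, Matrix.mulVec, dotProduct]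
      simp only [Finset.mul_sum, Finset.sum_mul, mul_assoc]
      exact Finset.sum_comm
    rw [e1, ← hmul, hdecomp, hsum]
    have hz : ∀ z, W (N z y • Matrix.single z a0 1) = N z y • W (Matrix.single z a0 1) :=
      fun z => hsmul _ _
    simp only [hz]
    calc ((∑ z, N z y • W (Matrix.single z a0 1)) *ᵥ u) x
        = ∑ w, (∑ z, N z y * W (Matrix.single z a0 1) x w) * u w := by
          simp [Matrix.mulVec, dotProduct, Matrix.sum_apply]
      _ = ∑ z, N z y * ∑ w, W (Matrix.single z a0 1) x w * u w := by
          simp only [Finset.mul_sum, Finset.sum_mul, mul_assoc]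
          exact Finset.sum_comm
      _ = (S * N) x y := by
          simp [Matrix.mul_apply, hS, Matrix.mulVec, dotProduct, mul_comm]
  have hSu : IsUnit S := by
    rw [Matrix.isUnit_iff_isUnit_det, isUnit_iff_ne_zero]
    intro hdet
    obtain ⟨v, hv, hSv⟩ := (Matrix.exists_mulVec_eq_zero_iff).mpr hdet
    obtain ⟨b, hb⟩ : ∃ b, v b ≠ 0 := by
      by_contra h; push_neg at h; exact hv (funext h)
    have e2 : W (Matrix.single a0 b 1) *ᵥ (S *ᵥ v) = v b • u := by
      rw [mulVec_mulVec, hWS, ← mulVec_mulVec, Matrix.single_mulVec]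
      have hupd : Function.update (0 : Fin q → K) a0 (1 * v b)
          = v b • (Pi.single a0 1 : Fin q → K) := by
        ext i
        rcases eq_or_ne i a0 with rfl | hne
        · simp
        · simp [Function.update_of_ne hne, Pi.single_eq_of_ne hne]
      rw [hupd, Matrix.mulVec_smul]
      congr 1
      ext x
      have h5 := congrFun huE x
      simp only [hS, hE] at h5 ⊢
      simp [Matrix.mulVec_single]
      simpa using h5
    rw [hSv, Matrix.mulVec_zero] at e2
    have : v b = 0 := by
      by_contra h
      exact hu0 (by simpa [smul_eq_zero, h] using e2.symm)
    exact hb this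
  exact ⟨S, hSu, hWS⟩

theorem aux_kinj {p q : ℕ} (hp : 1 ≤ p) (W1 W2 : Matrix (Fin q) (Fin q) K)
    (h : (1 : Matrix (Fin p) (Fin p) K) ⊗ₖ W1 = (1 : Matrix (Fin p) (Fin p) K) ⊗ₖ W2) :
    W1 = W2 := by
  ext a b
  have := congrFun (congrFun h (⟨0, hp⟩, a)) (⟨0, hp⟩, b)
  simpa [Matrix.one_apply] using this

theorem aux_k1 {n q : ℕ} (A B : Matrix (Fin q) (Fin q) K) :
    ((1 : Matrix (Fin n) (Fin n) K) ⊗ₖ A) * ((1 : Matrix (Fin n) (Fin n) K) ⊗ₖ B)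
      = (1 : Matrix (Fin n) (Fin n) K) ⊗ₖ (A * B) := by
  rw [← mul_kronecker_mul, Matrix.one_mul]

theorem stmt15 (p q r : ℕ) (hp : 1 ≤ p) (hq : 1 ≤ q) (hr : 1 ≤ r)
    (X : Matrix (Fin p × Fin q) (Fin p × Fin q) K)
    (Y : Matrix (Fin r × Fin q) (Fin r × Fin q) K)
    (hX : IsUnit X) (hY : IsUnit Y) :
    ((fun M => Xᵀ * M * Y) ''
        {M : Matrix (Fin p × Fin q) (Fin r × Fin q) K | ∃ A : Matrix (Fin p) (Fin r) K,
          M = Matrix.kroneckerMap (· * ·) A (1 : Matrix (Fin q) (Fin q) K)}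
      = {M : Matrix (Fin p × Fin q) (Fin r × Fin q) K | ∃ A : Matrix (Fin p) (Fin r) K,
          M = Matrix.kroneckerMap (· * ·) A (1 : Matrix (Fin q) (Fin q) K)})
    ↔ ∃ (P : Matrix (Fin p) (Fin p) K) (R : Matrix (Fin q) (Fin q) K)
        (Q : Matrix (Fin r) (Fin r) K),
        IsUnit P ∧ IsUnit R ∧ IsUnit Q ∧
        X = Matrix.kroneckerMap (· * ·) P Rᵀ ∧
        Y = Matrix.kroneckerMap (· * ·) Q R⁻¹ := by
  have hdX : IsUnit X.det := (Matrix.isUnit_iff_isUnit_det X).mp hX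
  have hdY : IsUnit Y.det := (Matrix.isUnit_iff_isUnit_det Y).mp hY
  have hdXT : IsUnit Xᵀ.det := by rwa [Matrix.det_transpose]
  have hXT1 : Xᵀ * (Xᵀ)⁻¹ = 1 := Matrix.mul_nonsing_inv _ hdXT
  have hXT1' : (Xᵀ)⁻¹ * Xᵀ = 1 := Matrix.nonsing_inv_mul _ hdXT
  have hY1 : Y * Y⁻¹ = 1 := Matrix.mul_nonsing_inv _ hdY
  have hY1' : Y⁻¹ * Y = 1 := Matrix.nonsing_inv_mul _ hdY
  constructor
  · intro hset
    have hsub : ∀ A : Matrix (Fin p) (Fin r) K, ∃ B : Matrix (Fin p) (Fin r) K,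
        Xᵀ * (A ⊗ₖ (1 : Matrix (Fin q) (Fin q) K)) * Y = B ⊗ₖ 1 := by
      intro A
      have hmem : Xᵀ * (A ⊗ₖ (1 : Matrix (Fin q) (Fin q) K)) * Y ∈
          {M : Matrix (Fin p × Fin q) (Fin r × Fin q) K | ∃ B : Matrix (Fin p) (Fin r) K,
            M = Matrix.kroneckerMap (· * ·) B (1 : Matrix (Fin q) (Fin q) K)} := by
        rw [← hset]
        exact ⟨A ⊗ₖ 1, ⟨A, rfl⟩, rfl⟩
      exact ⟨hmem.choose, hmem.choose_spec⟩
    set U : Matrix (Fin q) (Fin q) K → Matrix (Fin p × Fin q) (Fin p × Fin q) K :=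
      fun N => (Xᵀ)⁻¹ * ((1 : Matrix (Fin p) (Fin p) K) ⊗ₖ N) * Xᵀ with hUdef
    set V : Matrix (Fin q) (Fin q) K → Matrix (Fin r × Fin q) (Fin r × Fin q) K :=
      fun N => Y * ((1 : Matrix (Fin r) (Fin r) K) ⊗ₖ N) * Y⁻¹ with hVdef
    have hUV : ∀ N (A : Matrix (Fin p) (Fin r) K),
        U N * (A ⊗ₖ (1 : Matrix (Fin q) (Fin q) K)) = (A ⊗ₖ 1) * V N := by
      intro N A
      obtain ⟨B, hB⟩ := hsub A
      have comm : ((1 : Matrix (Fin p) (Fin p) K) ⊗ₖ N)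
            * (Xᵀ * (A ⊗ₖ (1 : Matrix (Fin q) (Fin q) K)) * Y)
          = (Xᵀ * (A ⊗ₖ (1 : Matrix (Fin q) (Fin q) K)) * Y)
            * ((1 : Matrix (Fin r) (Fin r) K) ⊗ₖ N) := by
        rw [hB, ← mul_kronecker_mul, ← mul_kronecker_mul]
        simp
      have h2 := congrArg
        (fun M : Matrix (Fin p × Fin q) (Fin r × Fin q) K => (Xᵀ)⁻¹ * M * Y⁻¹) comm
      simp only [hUdef, hVdef]
      simp only [Matrix.mul_assoc, hY1, Matrix.mul_one,
        Matrix.nonsing_inv_mul_cancel_left, hdXT] at h2 ⊢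
      exact h2
    have hWex : ∀ N, ∃ W : Matrix (Fin q) (Fin q) K,
        U N = (1 : Matrix (Fin p) (Fin p) K) ⊗ₖ W ∧
        V N = (1 : Matrix (Fin r) (Fin r) K) ⊗ₖ W :=
      fun N => aux_blocks hp hr (U N) (V N) (hUV N)
    choose W hUW hVW using hWex
    have hWadd : ∀ M N, W (M + N) = W M + W N := by
      intro M N
      refine aux_kinj hp _ _ ?_
      rw [← hUW, kronecker_add, ← hUW, ← hUW]
      simp only [hUdef, kronecker_add, Matrix.mul_add, Matrix.add_mul]
    have hWsmul : ∀ (c : K) N, W (c • N) = c • W N := by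
      intro c N
      refine aux_kinj hp _ _ ?_
      rw [← hUW, kronecker_smul, ← hUW]
      simp only [hUdef, kronecker_smul, Matrix.mul_smul, Matrix.smul_mul]
    have hWmul : ∀ M N, W (M * N) = W M * W N := by
      intro M N
      refine aux_kinj hp _ _ ?_
      rw [← hUW, ← aux_k1, ← hUW, ← hUW]
      simp only [hUdef]
      rw [show (1 : Matrix (Fin p) (Fin p) K) ⊗ₖ (M * N)
          = ((1 : Matrix (Fin p) (Fin p) K) ⊗ₖ M) * ((1 : Matrix (Fin p) (Fin p) K) ⊗ₖ N)
          from (aux_k1 M N).symm]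
      simp only [Matrix.mul_assoc, Matrix.mul_nonsing_inv_cancel_left, hdXT]
    have hWinj : ∀ N, W N = 0 → N = 0 := by
      intro N hWN
      have hUN : U N = 0 := by rw [hUW, hWN, kronecker_zero]
      have e : Xᵀ * U N * (Xᵀ)⁻¹ = (1 : Matrix (Fin p) (Fin p) K) ⊗ₖ N := by
        simp only [hUdef]
        simp only [Matrix.mul_assoc, Matrix.mul_nonsing_inv_cancel_left, hdXT,
          hXT1, Matrix.mul_one]
      rw [hUN, Matrix.mul_zero, Matrix.zero_mul] at e
      refine aux_kinj hp _ _ ?_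
      rw [← e, kronecker_zero]
    obtain ⟨S, hSu, hWS⟩ := aux_inner hq W hWadd hWsmul hWmul hWinj
    have hdS : IsUnit S.det := (Matrix.isUnit_iff_isUnit_det S).mp hSu
    have hS1 : S * S⁻¹ = 1 := Matrix.mul_nonsing_inv _ hdS
    have hS1' : S⁻¹ * S = 1 := Matrix.nonsing_inv_mul _ hdS
    -- X part
    have hXN : ∀ N : Matrix (Fin q) (Fin q) K,
        ((1 : Matrix (Fin p) (Fin p) K) ⊗ₖ N) * Xᵀ = Xᵀ * U N := by
      intro N
      simp only [hUdef, Matrix.mul_assoc, Matrix.mul_nonsing_inv_cancel_left, hdXT]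
    have hXcomm : ∀ N : Matrix (Fin q) (Fin q) K,
        ((1 : Matrix (Fin p) (Fin p) K) ⊗ₖ N) * (Xᵀ * ((1 : Matrix (Fin p) (Fin p) K) ⊗ₖ S))
        = (Xᵀ * ((1 : Matrix (Fin p) (Fin p) K) ⊗ₖ S)) * ((1 : Matrix (Fin p) (Fin p) K) ⊗ₖ N) := by
      intro N
      rw [← Matrix.mul_assoc, hXN, hUW, Matrix.mul_assoc, aux_k1, hWS, ← aux_k1,
        ← Matrix.mul_assoc]
    obtain ⟨P', hP'⟩ := aux_commutant hq _ hXcomm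
    have hXT : Xᵀ = P' ⊗ₖ S⁻¹ := by
      have h3 : Xᵀ * (((1:Matrix (Fin p) (Fin p) K) ⊗ₖ S) * ((1:Matrix (Fin p) (Fin p) K) ⊗ₖ S⁻¹))
          = (P' ⊗ₖ (1 : Matrix (Fin q) (Fin q) K)) * ((1:Matrix (Fin p) (Fin p) K) ⊗ₖ S⁻¹) := by
        rw [← Matrix.mul_assoc, hP']
      rw [aux_k1, hS1, ← mul_kronecker_mul, Matrix.mul_one, Matrix.one_mul,
        one_kronecker_one, Matrix.mul_one] at h3
      exact h3
    have hXfin : X = P'ᵀ ⊗ₖ (S⁻¹)ᵀ := by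
      rw [kroneckerMap_transpose, ← hXT, transpose_transpose]
    -- Y part
    have hYN : ∀ N : Matrix (Fin q) (Fin q) K,
        Y * ((1 : Matrix (Fin r) (Fin r) K) ⊗ₖ N) = V N * Y := by
      intro N
      simp only [hVdef, Matrix.mul_assoc, hY1', Matrix.mul_one]
    have hSWN : ∀ N : Matrix (Fin q) (Fin q) K, S⁻¹ * W N = N * S⁻¹ := by
      intro N
      calc S⁻¹ * W N = S⁻¹ * (W N * S) * S⁻¹ := by
            simp only [Matrix.mul_assoc, hS1, Matrix.mul_one]
        _ = S⁻¹ * (S * N) * S⁻¹ := by rw [hWS]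
        _ = N * S⁻¹ := by
            simp only [← Matrix.mul_assoc, hS1', Matrix.one_mul]
    have hYcomm : ∀ N : Matrix (Fin q) (Fin q) K,
        ((1 : Matrix (Fin r) (Fin r) K) ⊗ₖ N) * (((1 : Matrix (Fin r) (Fin r) K) ⊗ₖ S⁻¹) * Y)
        = (((1 : Matrix (Fin r) (Fin r) K) ⊗ₖ S⁻¹) * Y) * ((1 : Matrix (Fin r) (Fin r) K) ⊗ₖ N) := by
      intro N
      have e : (((1 : Matrix (Fin r) (Fin r) K) ⊗ₖ S⁻¹) * Y) * ((1 : Matrix (Fin r) (Fin r) K) ⊗ₖ N)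
          = ((1 : Matrix (Fin r) (Fin r) K) ⊗ₖ N) * (((1 : Matrix (Fin r) (Fin r) K) ⊗ₖ S⁻¹) * Y) := by
        rw [Matrix.mul_assoc, hYN, hVW, ← Matrix.mul_assoc, aux_k1, hSWN, ← aux_k1,
          Matrix.mul_assoc]
      exact e.symm
    obtain ⟨Q, hQ⟩ := aux_commutant hq _ hYcomm
    have hYfin : Y = Q ⊗ₖ S := by
      have h3 : ((1:Matrix (Fin r) (Fin r) K) ⊗ₖ S) * (((1:Matrix (Fin r) (Fin r) K) ⊗ₖ S⁻¹) * Y)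
          = ((1:Matrix (Fin r) (Fin r) K) ⊗ₖ S) * (Q ⊗ₖ (1 : Matrix (Fin q) (Fin q) K)) := by
        rw [hQ]
      rw [← Matrix.mul_assoc, aux_k1, hS1, ← mul_kronecker_mul, Matrix.one_mul,
        Matrix.mul_one, one_kronecker_one, Matrix.one_mul] at h3
      exact h3
    refine ⟨P'ᵀ, S⁻¹, Q, ?_, ?_, ?_, hXfin, ?_⟩
    · rw [Matrix.isUnit_iff_isUnit_det, isUnit_iff_ne_zero]
      intro h0
      rw [hXfin, det_kronecker, h0, Fintype.card_fin, Fintype.card_fin] at hdX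
      rw [zero_pow (by omega : q ≠ 0), zero_mul] at hdX
      exact (isUnit_iff_ne_zero.mp hdX) rfl
    · exact Matrix.isUnit_nonsing_inv_iff.mpr hSu
    · rw [Matrix.isUnit_iff_isUnit_det, isUnit_iff_ne_zero]
      intro h0
      rw [hYfin, det_kronecker, h0, Fintype.card_fin, Fintype.card_fin] at hdY
      rw [zero_pow (by omega : q ≠ 0), zero_mul] at hdY
      exact (isUnit_iff_ne_zero.mp hdY) rfl
    · rw [Matrix.nonsing_inv_nonsing_inv S hdS]
      exact hYfin
  · rintro ⟨P, R, Q, hP, hR, hQ, hXe, hYe⟩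
    have hdP : IsUnit P.det := (Matrix.isUnit_iff_isUnit_det P).mp hP
    have hdPT : IsUnit Pᵀ.det := by rwa [Matrix.det_transpose]
    have hdR : IsUnit R.det := (Matrix.isUnit_iff_isUnit_det R).mp hR
    have hdQ : IsUnit Q.det := (Matrix.isUnit_iff_isUnit_det Q).mp hQ
    have hXTe : Xᵀ = Pᵀ ⊗ₖ R := by
      rw [hXe, ← kroneckerMap_transpose, transpose_transpose]
    ext M
    simp only [Set.mem_image, Set.mem_setOf_eq]
    constructor
    · rintro ⟨M', ⟨A, rfl⟩, rfl⟩
      refine ⟨Pᵀ * A * Q, ?_⟩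
      show Xᵀ * (A ⊗ₖ (1 : Matrix (Fin q) (Fin q) K)) * Y = (Pᵀ * A * Q) ⊗ₖ 1
      rw [hXTe, hYe]
      show (Pᵀ ⊗ₖ R) * (A ⊗ₖ 1) * (Q ⊗ₖ R⁻¹) = _
      rw [← mul_kronecker_mul, ← mul_kronecker_mul, Matrix.mul_one, Matrix.mul_nonsing_inv _ hdR]
    · rintro ⟨B, rfl⟩
      refine ⟨((Pᵀ)⁻¹ * B * Q⁻¹) ⊗ₖ (1 : Matrix (Fin q) (Fin q) K), ⟨_, rfl⟩, ?_⟩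
      show Xᵀ * (((Pᵀ)⁻¹ * B * Q⁻¹) ⊗ₖ (1 : Matrix (Fin q) (Fin q) K)) * Y = B ⊗ₖ 1
      rw [hXTe, hYe]
      show (Pᵀ ⊗ₖ R) * (((Pᵀ)⁻¹ * B * Q⁻¹) ⊗ₖ 1) * (Q ⊗ₖ R⁻¹) = _
      have hQ1' : Q⁻¹ * Q = 1 := Matrix.nonsing_inv_mul _ hdQ
      rw [← mul_kronecker_mul, ← mul_kronecker_mul, Matrix.mul_one, Matrix.mul_nonsing_inv _ hdR]
      simp only [Matrix.mul_assoc, Matrix.mul_nonsing_inv_cancel_left, hdPT, hQ1',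
        Matrix.mul_one]
end

section
/- Any two elements of T_{p,q,r} = M_{p,r}(K) ⊗ I_q with the same matrix rank lie in the same orbit under the setwise stabilizer of T_{p,q,r} in GL_{pq}(K) × GL_{qr}(K) acting by M·(X,Y) = XᵀMY. -/
open Matrix

variable {K : Type*} [Field K]

section Aux

open Submodule LinearMap

variable {V W : Type*} [AddCommGroup V] [Module K V] [AddCommGroup W] [Module K W]
  [FiniteDimensional K V] [FiniteDimensional K W]

/-- Restricted equiv from a complement of the kernel onto the range. -/
noncomputable def stmt16restr (f : V →ₗ[K] W) (C : Submodule K V) (h : IsCompl (ker f) C) :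
    C ≃ₗ[K] range f :=
  ((Submodule.quotientEquivOfIsCompl (ker f) C h).symm.trans f.quotKerEquivRange)

omit [FiniteDimensional K V] [FiniteDimensional K W] in
lemma stmt16restr_apply (f : V →ₗ[K] W) (C : Submodule K V) (h : IsCompl (ker f) C) (c : C) :
    (stmt16restr f C h c : W) = f c := rfl

/-- Two linear maps between finite-dimensional spaces with equal rank are conjugate. -/
lemma stmt16_conj_of_rank_eq (f g : V →ₗ[K] W)
    (h : Module.finrank K (range f) = Module.finrank K (range g)) :
    ∃ (e₁ : V ≃ₗ[K] V) (e₂ : W ≃ₗ[K] W),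
      g = (e₂ : W →ₗ[K] W) ∘ₗ f ∘ₗ (e₁ : V →ₗ[K] V) := by
  obtain ⟨Cf, hCf⟩ := Submodule.exists_isCompl (ker f)
  obtain ⟨Cg, hCg⟩ := Submodule.exists_isCompl (ker g)
  obtain ⟨Df, hDf⟩ := Submodule.exists_isCompl (range f)
  obtain ⟨Dg, hDg⟩ := Submodule.exists_isCompl (range g)
  have hker : Module.finrank K (ker f) = Module.finrank K (ker g) := by
    have h1 := f.finrank_range_add_finrank_ker
    have h2 := g.finrank_range_add_finrank_ker
    omega
  have hC : Module.finrank K Cg = Module.finrank K Cf := by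
    have h1 := Submodule.finrank_add_eq_of_isCompl hCf
    have h2 := Submodule.finrank_add_eq_of_isCompl hCg
    omega
  have hD : Module.finrank K Df = Module.finrank K Dg := by
    have h1 := Submodule.finrank_add_eq_of_isCompl hDf
    have h2 := Submodule.finrank_add_eq_of_isCompl hDg
    omega
  let α : Cg ≃ₗ[K] Cf := LinearEquiv.ofFinrankEq _ _ hC
  let β : (ker g) ≃ₗ[K] (ker f) := LinearEquiv.ofFinrankEq _ _ hker.symm
  let δ : Df ≃ₗ[K] Dg := LinearEquiv.ofFinrankEq _ _ hD
  let ef := stmt16restr f Cf hCf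
  let eg := stmt16restr g Cg hCg
  let e₁ : V ≃ₗ[K] V :=
    (prodEquivOfIsCompl Cg (ker g) hCg.symm).symm.trans
      ((α.prodCongr β).trans (prodEquivOfIsCompl Cf (ker f) hCf.symm))
  let γ : range f ≃ₗ[K] range g := (ef.symm.trans α.symm).trans eg
  let e₂ : W ≃ₗ[K] W :=
    (prodEquivOfIsCompl (range f) Df hDf).symm.trans
      ((γ.prodCongr δ).trans (prodEquivOfIsCompl (range g) Dg hDg))
  refine ⟨e₁, e₂, ?_⟩
  have key : ∀ x : Cg × (ker g),
      e₂ (f (e₁ (prodEquivOfIsCompl Cg (ker g) hCg.symm x))) =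
      g (prodEquivOfIsCompl Cg (ker g) hCg.symm x) := by
    rintro ⟨c, k⟩
    have he₁ : e₁ (prodEquivOfIsCompl Cg (ker g) hCg.symm (c, k)) = (α c : V) + (β k : V) := by
      simp [e₁, LinearEquiv.prodCongr_apply]
    rw [he₁]
    have hfk : f ((β k : V)) = 0 := (β k).2
    have hfc : f ((α c : V) + (β k : V)) = (ef (α c) : W) := by
      rw [map_add, hfk, add_zero, stmt16restr_apply]
    rw [hfc]
    have hsymm : (prodEquivOfIsCompl (range f) Df hDf).symm ((ef (α c) : W))
        = (ef (α c), 0) := by simp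
    have : e₂ ((ef (α c) : W)) = (γ (ef (α c)) : W) := by
      simp only [e₂, LinearEquiv.trans_apply, hsymm]
      simp [LinearEquiv.prodCongr_apply]
    rw [this]
    have : γ (ef (α c)) = eg c := by
      simp [γ, LinearEquiv.symm_apply_apply]
    rw [this, stmt16restr_apply]
    have : g (prodEquivOfIsCompl Cg (ker g) hCg.symm (c, k)) = g c := by
      simp [k.2]
    rw [this]
  ext v
  have := key ((prodEquivOfIsCompl Cg (ker g) hCg.symm).symm v)
  simpa only [LinearEquiv.apply_symm_apply, LinearMap.comp_apply, LinearEquiv.coe_coe] using this.symm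

/-- Matrices of equal rank are equivalent. -/
lemma stmt16_matrix_equiv_of_rank_eq {p r : ℕ} (A B : Matrix (Fin p) (Fin r) K)
    (h : A.rank = B.rank) :
    ∃ (P : Matrix (Fin p) (Fin p) K) (Q : Matrix (Fin r) (Fin r) K),
      IsUnit P ∧ IsUnit Q ∧ P * A * Q = B := by
  have hr : Module.finrank K (range A.mulVecLin) = Module.finrank K (range B.mulVecLin) := h
  obtain ⟨e₁, e₂, heq⟩ := stmt16_conj_of_rank_eq A.mulVecLin B.mulVecLin hr
  refine ⟨LinearMap.toMatrix' (e₂ : (Fin p → K) →ₗ[K] (Fin p → K)),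
    LinearMap.toMatrix' (e₁ : (Fin r → K) →ₗ[K] (Fin r → K)), ?_, ?_, ?_⟩
  · exact ⟨⟨_, LinearMap.toMatrix' (e₂.symm : (Fin p → K) →ₗ[K] (Fin p → K)),
      by rw [← LinearMap.toMatrix'_comp]; simp,
      by rw [← LinearMap.toMatrix'_comp]; simp⟩, rfl⟩
  · exact ⟨⟨_, LinearMap.toMatrix' (e₁.symm : (Fin r → K) →ₗ[K] (Fin r → K)),
      by rw [← LinearMap.toMatrix'_comp]; simp,
      by rw [← LinearMap.toMatrix'_comp]; simp⟩, rfl⟩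
  · have : LinearMap.toMatrix' (B.mulVecLin) = B := LinearMap.toMatrix'_toLin' B
    rw [← this, heq, LinearMap.toMatrix'_comp, LinearMap.toMatrix'_comp]
    have hA : LinearMap.toMatrix' (A.mulVecLin) = A := LinearMap.toMatrix'_toLin' A
    rw [hA, Matrix.mul_assoc]

/-- Rank of `A ⊗ₖ 1`. -/
lemma stmt16_rank_kronecker_one {p r : ℕ} (q : ℕ) (A : Matrix (Fin p) (Fin r) K) :
    (Matrix.kroneckerMap (· * ·) A (1 : Matrix (Fin q) (Fin q) K)).rank = q * A.rank := by
  classical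
  let eR : (Fin q → Fin r → K) ≃ₗ[K] (Fin r × Fin q → K) :=
    { toFun := fun w x => w x.2 x.1
      map_add' := fun _ _ => rfl
      map_smul' := fun _ _ => rfl
      invFun := fun v a j => v (j, a)
      left_inv := fun _ => rfl
      right_inv := fun _ => rfl }
  let eP : (Fin q → Fin p → K) ≃ₗ[K] (Fin p × Fin q → K) :=
    { toFun := fun w x => w x.2 x.1
      map_add' := fun _ _ => rfl
      map_smul' := fun _ _ => rfl
      invFun := fun v a j => v (j, a)
      left_inv := fun _ => rfl
      right_inv := fun _ => rfl }
  have hcomm : (Matrix.kroneckerMap (· * ·) A (1 : Matrix (Fin q) (Fin q) K)).mulVecLin ∘ₗ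
      (eR : (Fin q → Fin r → K) →ₗ[K] (Fin r × Fin q → K))
      = (eP : (Fin q → Fin p → K) →ₗ[K] (Fin p × Fin q → K)) ∘ₗ
        (A.mulVecLin.compLeft (Fin q)) := by
    apply LinearMap.ext
    intro w
    funext ⟨i, a⟩
    simp only [LinearMap.comp_apply, Matrix.mulVecLin_apply, Matrix.mulVec, dotProduct]
    simp [Fintype.sum_prod_type, Matrix.kroneckerMap_apply, Matrix.one_apply,
      LinearMap.compLeft, eR, eP, mul_ite, mul_comm, Finset.sum_ite_eq, Matrix.mulVec,
      dotProduct]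
    rfl
  have hrange : range (Matrix.kroneckerMap (· * ·) A (1 : Matrix (Fin q) (Fin q) K)).mulVecLin
      = Submodule.map (eP : (Fin q → Fin p → K) →ₗ[K] (Fin p × Fin q → K))
          (range (A.mulVecLin.compLeft (Fin q))) := by
    rw [← LinearMap.range_comp, ← hcomm, LinearMap.range_comp, LinearEquiv.range,
      Submodule.map_top]
  have h1 : (Matrix.kroneckerMap (· * ·) A (1 : Matrix (Fin q) (Fin q) K)).rank
      = Module.finrank K (range (A.mulVecLin.compLeft (Fin q))) := by
    rw [Matrix.rank, hrange, LinearEquiv.finrank_map_eq]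
  set f := A.mulVecLin
  let F : (Fin q → range f) →ₗ[K] (Fin q → Fin p → K) := (range f).subtype.compLeft (Fin q)
  have hF : ∀ u, F u ∈ range (f.compLeft (Fin q)) := by
    intro u
    choose v hv using fun a => (u a).2
    exact ⟨fun a => v a, funext fun a => hv a⟩
  let F' : (Fin q → range f) →ₗ[K] range (f.compLeft (Fin q)) :=
    LinearMap.codRestrict _ F hF
  have hbij : Function.Bijective F' := by
    constructor
    · intro u u' huv
      funext a
      ext x
      exact congrFun (congrFun (congrArg Subtype.val huv) a) x
    · rintro ⟨w, v, rfl⟩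
      refine ⟨fun a => ⟨f (v a), ⟨v a, rfl⟩⟩, ?_⟩
      ext a
      rfl
  have h2 : Module.finrank K (range (f.compLeft (Fin q)))
      = Module.finrank K (Fin q → range f) :=
    (LinearEquiv.ofBijective F' hbij).finrank_eq.symm
  rw [h1, h2, Module.finrank_pi_fintype, Finset.sum_const, Finset.card_univ, Fintype.card_fin,
    smul_eq_mul]
  rfl

/-- Kronecker product of a unit with the identity is a unit. -/
lemma stmt16_isUnit_kronecker_one {n q : ℕ} (P : Matrix (Fin n) (Fin n) K) (h : IsUnit P) :
    IsUnit (Matrix.kroneckerMap (· * ·) P (1 : Matrix (Fin q) (Fin q) K)) := by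
  obtain ⟨u, rfl⟩ := h
  refine ⟨⟨_, Matrix.kroneckerMap (· * ·) (↑u⁻¹ : Matrix (Fin n) (Fin n) K)
    (1 : Matrix (Fin q) (Fin q) K), ?_, ?_⟩, rfl⟩
  · show Matrix.kroneckerMap (· * ·) (↑u : Matrix (Fin n) (Fin n) K)
        (1 : Matrix (Fin q) (Fin q) K) *
      Matrix.kroneckerMap (· * ·) (↑u⁻¹ : Matrix (Fin n) (Fin n) K)
        (1 : Matrix (Fin q) (Fin q) K) = 1
    rw [← Matrix.mul_kronecker_mul, Units.mul_inv, one_mul]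
    exact Matrix.one_kronecker_one
  · show Matrix.kroneckerMap (· * ·) (↑u⁻¹ : Matrix (Fin n) (Fin n) K)
        (1 : Matrix (Fin q) (Fin q) K) *
      Matrix.kroneckerMap (· * ·) (↑u : Matrix (Fin n) (Fin n) K)
        (1 : Matrix (Fin q) (Fin q) K) = 1
    rw [← Matrix.mul_kronecker_mul, Units.inv_mul, one_mul]
    exact Matrix.one_kronecker_one

end Aux

theorem stmt16 (p q r : ℕ) (hq : 1 ≤ q) (A B : Matrix (Fin p) (Fin r) K)
    (hrank : (Matrix.kroneckerMap (· * ·) A (1 : Matrix (Fin q) (Fin q) K)).rank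
      = (Matrix.kroneckerMap (· * ·) B (1 : Matrix (Fin q) (Fin q) K)).rank) :
    ∃ (X : Matrix (Fin p × Fin q) (Fin p × Fin q) K)
      (Y : Matrix (Fin r × Fin q) (Fin r × Fin q) K),
      IsUnit X ∧ IsUnit Y ∧
      ((fun M => Xᵀ * M * Y) ''
          {M : Matrix (Fin p × Fin q) (Fin r × Fin q) K | ∃ C : Matrix (Fin p) (Fin r) K,
            M = Matrix.kroneckerMap (· * ·) C (1 : Matrix (Fin q) (Fin q) K)}
        = {M : Matrix (Fin p × Fin q) (Fin r × Fin q) K | ∃ C : Matrix (Fin p) (Fin r) K,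
            M = Matrix.kroneckerMap (· * ·) C (1 : Matrix (Fin q) (Fin q) K)}) ∧
      Xᵀ * Matrix.kroneckerMap (· * ·) A (1 : Matrix (Fin q) (Fin q) K) * Y
        = Matrix.kroneckerMap (· * ·) B (1 : Matrix (Fin q) (Fin q) K) := by
  -- ranks of A and B agree
  have hAB : A.rank = B.rank := by
    have hA := stmt16_rank_kronecker_one (K := K) q A
    have hB := stmt16_rank_kronecker_one (K := K) q B
    rw [hA, hB] at hrank
    exact Nat.eq_of_mul_eq_mul_left (by omega) hrank
  obtain ⟨P, Q, hP, hQ, hPQ⟩ := stmt16_matrix_equiv_of_rank_eq A B hAB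
  refine ⟨Matrix.kroneckerMap (· * ·) Pᵀ (1 : Matrix (Fin q) (Fin q) K),
    Matrix.kroneckerMap (· * ·) Q (1 : Matrix (Fin q) (Fin q) K),
    stmt16_isUnit_kronecker_one _ ((Matrix.isUnit_transpose P).2 hP),
    stmt16_isUnit_kronecker_one _ hQ, ?_, ?_⟩
  · -- transpose of X
    have hXT : (Matrix.kroneckerMap (· * ·) Pᵀ (1 : Matrix (Fin q) (Fin q) K))ᵀ
        = Matrix.kroneckerMap (· * ·) P (1 : Matrix (Fin q) (Fin q) K) := by
      rw [← Matrix.kroneckerMap_transpose]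
      simp
    have haction : ∀ C : Matrix (Fin p) (Fin r) K,
        (Matrix.kroneckerMap (· * ·) Pᵀ (1 : Matrix (Fin q) (Fin q) K))ᵀ *
          Matrix.kroneckerMap (· * ·) C (1 : Matrix (Fin q) (Fin q) K) *
          Matrix.kroneckerMap (· * ·) Q (1 : Matrix (Fin q) (Fin q) K)
        = Matrix.kroneckerMap (· * ·) (P * C * Q) (1 : Matrix (Fin q) (Fin q) K) := by
      intro C
      rw [hXT, ← Matrix.mul_kronecker_mul, ← Matrix.mul_kronecker_mul]
      simp
    ext M
    constructor
    · rintro ⟨N, ⟨C, rfl⟩, rfl⟩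
      exact ⟨P * C * Q, haction C⟩
    · rintro ⟨C, rfl⟩
      obtain ⟨uP, rfl⟩ := hP
      obtain ⟨uQ, rfl⟩ := hQ
      refine ⟨Matrix.kroneckerMap (· * ·) ((↑uP⁻¹ : Matrix (Fin p) (Fin p) K) * C *
        (↑uQ⁻¹ : Matrix (Fin r) (Fin r) K)) (1 : Matrix (Fin q) (Fin q) K),
        ⟨_, rfl⟩, ?_⟩
      refine (haction _).trans ?_
      have hC : (uP : Matrix (Fin p) (Fin p) K) * ((↑uP⁻¹ : Matrix (Fin p) (Fin p) K) * C *
            (↑uQ⁻¹ : Matrix (Fin r) (Fin r) K)) * (uQ : Matrix (Fin r) (Fin r) K) = C := by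
        calc (uP : Matrix (Fin p) (Fin p) K) * ((↑uP⁻¹ : Matrix (Fin p) (Fin p) K) * C *
              (↑uQ⁻¹ : Matrix (Fin r) (Fin r) K)) * (uQ : Matrix (Fin r) (Fin r) K)
            = ((uP : Matrix (Fin p) (Fin p) K) * (↑uP⁻¹ : Matrix (Fin p) (Fin p) K)) * C *
              ((↑uQ⁻¹ : Matrix (Fin r) (Fin r) K) * (uQ : Matrix (Fin r) (Fin r) K)) := by
              simp only [Matrix.mul_assoc]
          _ = C := by
              rw [Units.mul_inv, Units.inv_mul, Matrix.one_mul, Matrix.mul_one]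
      rw [hC]
  · have hXT : (Matrix.kroneckerMap (· * ·) Pᵀ (1 : Matrix (Fin q) (Fin q) K))ᵀ
        = Matrix.kroneckerMap (· * ·) P (1 : Matrix (Fin q) (Fin q) K) := by
      rw [← Matrix.kroneckerMap_transpose]
      simp
    rw [hXT, ← Matrix.mul_kronecker_mul, ← Matrix.mul_kronecker_mul]
    simp [hPQ]
end

section
/- The 2-dimensional space T_{2,2,1} of bilinear forms corresponding to the product of a 2×2 matrix by a 2×1 vector, spanned by (a,b) ↦ a₀₀b₀ + a₀₁b₁ and (a,b) ↦ a₁₀b₀ + a₁₁b₁ on K⁴ × K², has bilinear rank exactly 4: it is contained in a span of 4 rank-one bilinear forms but not in a span of 3. -/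
open scoped BigOperators

variable {K : Type*} [Field K]

lemma proj_ne_zero {m : ℕ} (i : Fin m) :
    (LinearMap.proj i : (Fin m → K) →ₗ[K] K) ≠ 0 := by
  intro h
  have := LinearMap.congr_fun h (Pi.single i 1)
  simp [LinearMap.proj_apply] at this

theorem stmt18 :
    (∃ (φ : Fin 4 → Bil 4 2 K) (c d : Fin 4 → K),
      (∀ t, IsRankOne (φ t)) ∧
      (∀ (a : Fin 4 → K) (b : Fin 2 → K),
        a 0 * b 0 + a 1 * b 1 = ∑ t, c t * φ t a b) ∧
      (∀ (a : Fin 4 → K) (b : Fin 2 → K),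
        a 2 * b 0 + a 3 * b 1 = ∑ t, d t * φ t a b))
    ∧ ¬ (∃ (φ : Fin 3 → Bil 4 2 K) (c d : Fin 3 → K),
      (∀ t, IsRankOne (φ t)) ∧
      (∀ (a : Fin 4 → K) (b : Fin 2 → K),
        a 0 * b 0 + a 1 * b 1 = ∑ t, c t * φ t a b) ∧
      (∀ (a : Fin 4 → K) (b : Fin 2 → K),
        a 2 * b 0 + a 3 * b 1 = ∑ t, d t * φ t a b)) := by
  constructor
  · refine ⟨![(LinearMap.proj 0).smulRight (LinearMap.proj 0),
              (LinearMap.proj 1).smulRight (LinearMap.proj 1),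
              (LinearMap.proj 2).smulRight (LinearMap.proj 0),
              (LinearMap.proj 3).smulRight (LinearMap.proj 1)],
           ![1, 1, 0, 0], ![0, 0, 1, 1], ?_, ?_, ?_⟩
    · intro t
      fin_cases t
      · exact ⟨LinearMap.proj 0, LinearMap.proj 0, proj_ne_zero _, proj_ne_zero _,
          fun a b => rfl⟩
      · exact ⟨LinearMap.proj 1, LinearMap.proj 1, proj_ne_zero _, proj_ne_zero _,
          fun a b => rfl⟩
      · exact ⟨LinearMap.proj 2, LinearMap.proj 0, proj_ne_zero _, proj_ne_zero _,
          fun a b => rfl⟩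
      · exact ⟨LinearMap.proj 3, LinearMap.proj 1, proj_ne_zero _, proj_ne_zero _,
          fun a b => rfl⟩
    · intro a b
      simp [Fin.sum_univ_four, LinearMap.smulRight_apply, smul_eq_mul]
    · intro a b
      simp [Fin.sum_univ_four, LinearMap.smulRight_apply, smul_eq_mul]
  · rintro ⟨φ, c, d, hr, hf, hg⟩
    choose α β hα hβ hφ using hr
    set v : Fin 3 → (Fin 4 → K) := fun t =>
      ![c t * β t (Pi.single 0 1), c t * β t (Pi.single 1 1),
        d t * β t (Pi.single 0 1), d t * β t (Pi.single 1 1)] with hv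
    have hmem : ∀ a : Fin 4 → K, a = ∑ t, α t a • v t := by
      intro a
      have h0 := hf a (Pi.single 0 1)
      have h1 := hf a (Pi.single 1 1)
      have h2 := hg a (Pi.single 0 1)
      have h3 := hg a (Pi.single 1 1)
      simp only [hφ, Pi.single_eq_same, Pi.single_eq_of_ne (by decide : (1:Fin 2) ≠ 0),
        Pi.single_eq_of_ne (by decide : (0:Fin 2) ≠ 1), mul_one, mul_zero, add_zero,
        zero_add] at h0 h1 h2 h3
      rw [Fin.sum_univ_three] at h0 h1 h2 h3
      funext i
      fin_cases i <;> simp [v, Fin.sum_univ_three]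
      · linear_combination h0
      · linear_combination h1
      · linear_combination h2
      · linear_combination h3
    have hspan : Submodule.span K (Set.range v) = ⊤ := by
      rw [eq_top_iff]
      intro a _
      rw [hmem a]
      exact Submodule.sum_mem _ fun t _ =>
        Submodule.smul_mem _ _ (Submodule.subset_span ⟨t, rfl⟩)
    have hle := finrank_le_of_span_eq_top hspan
    simp [Module.finrank_pi] at hle
end
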